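/- arXiv:2211.07527 — 4 statements merged into one kernel-verified Lean document; each statement's English description precedes it below -/
import Mathlib

section
/- Let L(x) = i[H,x] + Σ_{i=1}^m (V_i* x V_i − ½(V_i*V_i x + x V_i*V_i)) and L'(x) = i[H',x] + Σ_{i=1}^{m'} (W_i* x W_i − ½(W_i*W_i x + x W_i*W_i)) be two Lindblad generators on Mₙ(ℂ) (with H, H' Hermitian; the families {V_i}, {W_i} need not be orthonormal). Then there exists a constant C > 0 with Γ_L ≤_cp C Γ_{L'} if and only if span{Iₙ, V₁, …, V_m} ⊆ span{Iₙ, W₁, …, W_{m'}} (complex linear spans). -/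
open Matrix
open scoped ComplexOrder Kronecker

/-- `n × n` complex matrices. -/
abbrev Mat (n : ℕ) := Matrix (Fin n) (Fin n) ℂ

/-- The gradient form (carré du champ) of a map `L`:
`Γ_L(x,y) = L(x*y) − L(x*)y − x*L(y)`. -/
noncomputable def gradForm {n : ℕ} (L : Mat n → Mat n) (x y : Mat n) : Mat n :=
  L (xᴴ * y) - L xᴴ * y - xᴴ * L y

/-- The amplification `id_{M_m} ⊗ L` acting on `M_m(Mₙ(ℂ))`,
realized on matrices indexed by `Fin m × Fin n`. -/
noncomputable def amp {n : ℕ} (m : ℕ) (L : Mat n → Mat n)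
    (X : Matrix (Fin m × Fin n) (Fin m × Fin n) ℂ) :
    Matrix (Fin m × Fin n) (Fin m × Fin n) ℂ :=
  Matrix.of fun p q => L (Matrix.of fun a b => X (p.1, a) (q.1, b)) p.2 q.2

/-- The amplified gradient form `Γ_{id_{M_m} ⊗ L}`. -/
noncomputable def gradFormAmp {n : ℕ} (m : ℕ) (L : Mat n → Mat n)
    (X Y : Matrix (Fin m × Fin n) (Fin m × Fin n) ℂ) :
    Matrix (Fin m × Fin n) (Fin m × Fin n) ℂ :=
  amp m L (Xᴴ * Y) - amp m L Xᴴ * Y - Xᴴ * amp m L Y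

/-- Complete positivity of the gradient form of `L`. -/
def GradCP {n : ℕ} (L : Mat n → Mat n) : Prop :=
  ∀ (m : ℕ) (X : Matrix (Fin m × Fin n) (Fin m × Fin n) ℂ),
    (gradFormAmp m L X X).PosSemidef

/-- The Lindblad generator with Hamiltonian `H` and jump operators `V`:
`L(x) = i[H,x] + Σ_j (V_j* x V_j − ½(V_j*V_j x + x V_j*V_j))`. -/
noncomputable def lindbladOf {n : ℕ} (H : Mat n) {m : ℕ} (V : Fin m → Mat n) :
    Mat n → Mat n :=
  fun x => Complex.I • (H * x - x * H) +
    ∑ i, ((V i)ᴴ * x * V i -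
      (2⁻¹ : ℂ) • ((V i)ᴴ * V i * x + x * ((V i)ᴴ * V i)))

/-- `L` is a Lindblad generator. -/
def IsLindblad {n : ℕ} (L : Mat n → Mat n) : Prop :=
  ∃ (H : Mat n) (m : ℕ) (V : Fin m → Mat n), H.IsHermitian ∧ L = lindbladOf H V

/-- The Hilbert–Schmidt norm of a matrix. -/
noncomputable def hsNorm {n : ℕ} (x : Mat n) : ℝ :=
  Real.sqrt (Matrix.trace (xᴴ * x)).re

/-- The `2 → 2` operator norm of a map on matrices, with respect to the
Hilbert–Schmidt norm. -/
noncomputable def norm22 {n : ℕ} (L : Mat n → Mat n) : ℝ :=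
  sSup {r : ℝ | ∃ x : Mat n, hsNorm x ≤ 1 ∧ r = hsNorm (L x)}

/-- `σ`-detailed balance: `Tr(σ L(x)* y) = Tr(σ x* L(y))` for all `x, y`. -/
def DetailedBalance {n : ℕ} (σ : Mat n) (L : Mat n → Mat n) : Prop :=
  ∀ x y : Mat n, Matrix.trace (σ * (L x)ᴴ * y) = Matrix.trace (σ * xᴴ * L y)

/-- The jump operators `V` are traceless and orthonormal with respect to the
normalized trace `τ = Tr/n` (standard form). -/
def StdJump {n m : ℕ} (V : Fin m → Mat n) : Prop :=
  (∀ j, Matrix.trace (V j) = 0) ∧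
  ∀ i j, Matrix.trace ((V i)ᴴ * V j) = if i = j then (n : ℂ) else 0

/-- The jump map `Ψ(x) = Σ_j V_j* x V_j`. -/
noncomputable def jumpMap {n m : ℕ} (V : Fin m → Mat n) : Mat n → Mat n :=
  fun x => ∑ j, (V j)ᴴ * x * V j

/-- Complete positivity of a map on `Mₙ(ℂ)`. -/
def IsCPMap {n : ℕ} (Φ : Mat n → Mat n) : Prop :=
  ∀ (m : ℕ) (X : Matrix (Fin m × Fin n) (Fin m × Fin n) ℂ),
    X.PosSemidef → (amp m Φ X).PosSemidef

/-- The Lindblad generator `−(I − E_τ)`, where `E_τ(x) = τ(x)·Iₙ`. -/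
noncomputable def etauGen (n : ℕ) : Mat n → Mat n :=
  fun x => (Matrix.trace x / n) • 1 - x

/-- The gradient matrix `m_L = (Γ_L(e_{rs}, e_{tv}))` of `L`. -/
noncomputable def gradMatrix {n : ℕ} (L : Mat n → Mat n) :
    Matrix ((Fin n × Fin n) × Fin n) ((Fin n × Fin n) × Fin n) ℂ :=
  Matrix.of fun p q =>
    gradForm L (Matrix.single p.1.1 p.1.2 1)
      (Matrix.single q.1.1 q.1.2 1) p.2 q.2

/-- `E` is the trace-preserving conditional expectation onto (the subalgebra) `N`,
i.e. the orthogonal projection onto `N` for the trace inner product. -/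
def IsCondExpTau {n : ℕ} (N : Set (Mat n)) (E : Mat n → Mat n) : Prop :=
  IsLinearMap ℂ E ∧ (∀ x, E x ∈ N) ∧ (∀ x ∈ N, E x = x) ∧
  ∀ x : Mat n, ∀ y ∈ N, Matrix.trace ((x - E x)ᴴ * y) = 0

/-- `E` is the `σ`-preserving (GNS) conditional expectation onto `N`,
i.e. the orthogonal projection onto `N` for the GNS inner product
`⟨x,y⟩ = Tr(σ x* y)`. -/
def IsCondExpGNS {n : ℕ} (σ : Mat n) (N : Set (Mat n)) (E : Mat n → Mat n) : Prop :=
  IsLinearMap ℂ E ∧ (∀ x, E x ∈ N) ∧ (∀ x ∈ N, E x = x) ∧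
  ∀ x : Mat n, ∀ y ∈ N, Matrix.trace (σ * (x - E x)ᴴ * y) = 0


/-! ### Auxiliary machinery -/

section Aux

/-- `1 ⊗ A` on the amplified space. -/
noncomputable def kr {n : ℕ} (m : ℕ) (A : Mat n) :
    Matrix (Fin m × Fin n) (Fin m × Fin n) ℂ :=
  Matrix.of fun p q => if p.1 = q.1 then A p.2 q.2 else 0

noncomputable def blockOf {n m : ℕ} (p1 q1 : Fin m)
    (X : Matrix (Fin m × Fin n) (Fin m × Fin n) ℂ) : Mat n :=
  Matrix.of fun a b => X (p1, a) (q1, b)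

variable {n m k : ℕ}

lemma kr_conjT (A : Mat n) : (kr m A)ᴴ = kr m Aᴴ := by
  ext ⟨p1,p2⟩ ⟨q1,q2⟩
  simp only [conjTranspose_apply, kr, of_apply]
  by_cases h : p1 = q1 <;> simp [h, eq_comm]

lemma kr_mul (A B : Mat n) : kr m A * kr m B = kr m (A * B) := by
  ext ⟨p1,p2⟩ ⟨q1,q2⟩
  simp only [Matrix.mul_apply, kr, of_apply, Fintype.sum_prod_type]
  by_cases h : p1 = q1 <;> simp [h, Finset.sum_ite_eq, Matrix.mul_apply]

lemma kr_one : kr m (1 : Mat n) = 1 := by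
  ext p q
  by_cases h : p.1 = q.1 <;>
    simp [kr, h, Matrix.one_apply, Prod.ext_iff]

lemma kr_add (A B : Mat n) : kr m (A + B) = kr m A + kr m B := by
  ext p q
  by_cases h : p.1 = q.1 <;> simp [kr, h]

lemma kr_smul (c : ℂ) (A : Mat n) : kr m (c • A) = c • kr m A := by
  ext p q
  by_cases h : p.1 = q.1 <;> simp [kr, h]

lemma kr_sum (f : Fin k → Mat n) : kr m (∑ i, f i) = ∑ i, kr m (f i) := by
  ext p q
  by_cases h : p.1 = q.1 <;> simp [kr, h, Matrix.sum_apply]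

lemma blockOf_kr_mul (p1 q1 : Fin m) (A : Mat n) (X) :
    blockOf p1 q1 (kr m A * X) = A * blockOf p1 q1 X := by
  ext a b
  simp [blockOf, kr, Matrix.mul_apply, Fintype.sum_prod_type, Finset.sum_ite_eq,
    ite_mul, zero_mul]

lemma blockOf_mul_kr (p1 q1 : Fin m) (A : Mat n) (X) :
    blockOf p1 q1 (X * kr m A) = blockOf p1 q1 X * A := by
  ext a b
  simp [blockOf, kr, Matrix.mul_apply, Fintype.sum_prod_type, mul_ite, mul_zero,
    Finset.sum_ite_eq]

lemma blockOf_add (p1 q1 : Fin m) (X Y) :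
    blockOf (n := n) p1 q1 (X + Y) = blockOf p1 q1 X + blockOf p1 q1 Y := rfl
lemma blockOf_sub (p1 q1 : Fin m) (X Y) :
    blockOf (n := n) p1 q1 (X - Y) = blockOf p1 q1 X - blockOf p1 q1 Y := rfl
lemma blockOf_smul (p1 q1 : Fin m) (c : ℂ) (X) :
    blockOf (n := n) p1 q1 (c • X) = c • blockOf p1 q1 X := rfl
lemma blockOf_sum (p1 q1 : Fin m) (f : Fin k → Matrix (Fin m × Fin n) (Fin m × Fin n) ℂ) :
    blockOf p1 q1 (∑ i, f i) = ∑ i, blockOf p1 q1 (f i) := by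
  ext a b; simp [blockOf, Matrix.sum_apply]

end Aux

section Algebra
variable {ι : Type*} [Fintype ι] [DecidableEq ι]

set_option linter.unusedSectionVars false

lemma ham_part (H x y : Matrix ι ι ℂ) :
    Complex.I • (H * (xᴴ * y) - xᴴ * y * H)
      - Complex.I • (H * xᴴ - xᴴ * H) * y
      - xᴴ * (Complex.I • (H * y - y * H)) = 0 := by
  simp only [smul_mul_assoc, mul_smul_comm, mul_sub, sub_mul, smul_sub, mul_assoc]
  abel

lemma diss_part (V x y : Matrix ι ι ℂ) :
    (Vᴴ * (xᴴ * y) * V - (2⁻¹ : ℂ) • (Vᴴ * V * (xᴴ * y) + xᴴ * y * (Vᴴ * V)))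
      - (Vᴴ * xᴴ * V - (2⁻¹ : ℂ) • (Vᴴ * V * xᴴ + xᴴ * (Vᴴ * V))) * y
      - xᴴ * (Vᴴ * y * V - (2⁻¹ : ℂ) • (Vᴴ * V * y + y * (Vᴴ * V)))
      = (x * V - V * x)ᴴ * (y * V - V * y) := by
  simp only [conjTranspose_sub, conjTranspose_mul, sub_mul, mul_sub, add_mul, mul_add,
    smul_add, smul_sub, smul_mul_assoc, mul_smul_comm, mul_assoc]
  module

end Algebra

section Amp
variable {n m k : ℕ}

lemma amp_lindblad (H : Mat n) (V : Fin k → Mat n)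
    (X : Matrix (Fin m × Fin n) (Fin m × Fin n) ℂ) :
    amp m (lindbladOf H V) X =
      Complex.I • (kr m H * X - X * kr m H) +
        ∑ i, ((kr m (V i))ᴴ * X * kr m (V i) -
          (2⁻¹ : ℂ) • ((kr m (V i))ᴴ * kr m (V i) * X + X * ((kr m (V i))ᴴ * kr m (V i)))) := by
  refine Matrix.ext fun p q => ?_
  show lindbladOf H V (blockOf p.1 q.1 X) p.2 q.2 = _
  have key : blockOf p.1 q.1 (Complex.I • (kr m H * X - X * kr m H) +
        ∑ i, ((kr m (V i))ᴴ * X * kr m (V i) -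
          (2⁻¹ : ℂ) • ((kr m (V i))ᴴ * kr m (V i) * X + X * ((kr m (V i))ᴴ * kr m (V i)))))
      = lindbladOf H V (blockOf p.1 q.1 X) := by
    simp only [lindbladOf, kr_conjT, kr_mul, blockOf_add, blockOf_sub, blockOf_smul,
      blockOf_sum, blockOf_kr_mul, blockOf_mul_kr]
  rw [← key]
  rfl

/-- The main formula for the amplified gradient form of a Lindblad generator. -/
lemma gradFormAmp_lindblad (H : Mat n) (V : Fin k → Mat n)
    (X Y : Matrix (Fin m × Fin n) (Fin m × Fin n) ℂ) :
    gradFormAmp m (lindbladOf H V) X Y =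
      ∑ i, (X * kr m (V i) - kr m (V i) * X)ᴴ * (Y * kr m (V i) - kr m (V i) * Y) := by
  unfold gradFormAmp
  rw [amp_lindblad, amp_lindblad, amp_lindblad]
  simp only [conjTranspose_sub, conjTranspose_mul, smul_add, smul_sub, sub_mul, mul_sub,
    add_mul, mul_add, smul_mul_assoc, mul_smul_comm, mul_assoc, Finset.sum_mul,
    Finset.mul_sum, Finset.sum_sub_distrib, Finset.sum_add_distrib, ← Finset.smul_sum]
  module

lemma amp_combo (c : ℂ) (L1 L2 : Mat n → Mat n)
    (Z : Matrix (Fin m × Fin n) (Fin m × Fin n) ℂ) :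
    amp m (fun x => c • L1 x - L2 x) Z = c • amp m L1 Z - amp m L2 Z := by
  ext p q
  simp [amp, Matrix.sub_apply, Matrix.smul_apply]

lemma gradFormAmp_combo (c : ℂ) (L1 L2 : Mat n → Mat n)
    (X Y : Matrix (Fin m × Fin n) (Fin m × Fin n) ℂ) :
    gradFormAmp m (fun x => c • L1 x - L2 x) X Y =
      c • gradFormAmp m L1 X Y - gradFormAmp m L2 X Y := by
  unfold gradFormAmp
  rw [amp_combo, amp_combo, amp_combo]
  simp only [smul_sub, sub_mul, mul_sub, smul_mul_assoc, mul_smul_comm]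
  abel

end Amp

section CS
variable {ι : Type*} [Fintype ι] [DecidableEq ι] {m m' : ℕ}

set_option linter.unusedSectionVars false

lemma cs_key (b : Fin m' → ℂ) (u : Fin m' → (ι → ℂ)) :
    ∑ p, ‖(∑ i, b i • u i) p‖ ^ 2 ≤
      (∑ i, ‖b i‖ ^ 2) * ∑ i, ∑ p, ‖u i p‖ ^ 2 := by
  have step : ∀ p, ‖(∑ i, b i • u i) p‖ ^ 2 ≤ (∑ i, ‖b i‖ ^ 2) * ∑ i, ‖u i p‖ ^ 2 := by
    intro p
    have h1 : ‖(∑ i, b i • u i) p‖ ≤ ∑ i, ‖b i‖ * ‖u i p‖ := by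
      rw [Finset.sum_apply]
      refine (norm_sum_le _ _).trans ?_
      refine Finset.sum_le_sum fun i _ => ?_
      simp [Pi.smul_apply, norm_smul]
    calc ‖(∑ i, b i • u i) p‖ ^ 2 ≤ (∑ i, ‖b i‖ * ‖u i p‖) ^ 2 := by
          refine pow_le_pow_left₀ (norm_nonneg _) h1 2
      _ ≤ (∑ i, ‖b i‖ ^ 2) * ∑ i, ‖u i p‖ ^ 2 :=
          Finset.sum_mul_sq_le_sq_mul_sq _ _ _
  calc ∑ p, ‖(∑ i, b i • u i) p‖ ^ 2 ≤ ∑ p, (∑ i, ‖b i‖ ^ 2) * ∑ i, ‖u i p‖ ^ 2 :=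
        Finset.sum_le_sum fun p _ => step p
    _ = (∑ i, ‖b i‖ ^ 2) * ∑ i, ∑ p, ‖u i p‖ ^ 2 := by
        rw [← Finset.mul_sum, Finset.sum_comm]

lemma qform_conj (A B : Matrix ι ι ℂ) (v : ι → ℂ) :
    star v ⬝ᵥ ((Aᴴ * B) *ᵥ v) = star (A *ᵥ v) ⬝ᵥ (B *ᵥ v) := by
  rw [star_mulVec, ← Matrix.dotProduct_mulVec, mulVec_mulVec]

lemma qself (w : ι → ℂ) : star w ⬝ᵥ w = ((∑ p, ‖w p‖ ^ 2 : ℝ) : ℂ) := by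
  simp only [dotProduct, Pi.star_apply, Complex.star_def]
  push_cast
  refine Finset.sum_congr rfl fun p _ => ?_
  rw [← Complex.normSq_eq_conj_mul_self]
  rw [← Complex.sq_norm (w p)]
  push_cast
  ring

lemma sum_mulVec' {k : ℕ} (f : Fin k → Matrix ι ι ℂ) (v : ι → ℂ) :
    (∑ i, f i) *ᵥ v = ∑ i, f i *ᵥ v := by
  ext p
  simp [Matrix.mulVec, dotProduct, Finset.sum_apply, Matrix.sum_apply, Finset.sum_mul]
  rw [Finset.sum_comm]

lemma dotProduct_sum' {k : ℕ} (v : ι → ℂ) (w : Fin k → (ι → ℂ)) :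
    v ⬝ᵥ (∑ i, w i) = ∑ i, v ⬝ᵥ w i := by
  simp only [dotProduct, Finset.sum_apply, Finset.mul_sum]
  rw [Finset.sum_comm]

lemma qform_eval (F : Fin m' → Matrix ι ι ℂ) (G : Fin m → Matrix ι ι ℂ) (c : ℂ)
    (v : ι → ℂ) :
    star v ⬝ᵥ ((c • ∑ i, (F i)ᴴ * F i - ∑ j, (G j)ᴴ * G j) *ᵥ v)
      = c * ∑ i, star (F i *ᵥ v) ⬝ᵥ (F i *ᵥ v)
        - ∑ j, star (G j *ᵥ v) ⬝ᵥ (G j *ᵥ v) := by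
  rw [Matrix.sub_mulVec, dotProduct_sub, Matrix.smul_mulVec, dotProduct_smul,
    sum_mulVec', sum_mulVec', dotProduct_sum', dotProduct_sum']
  simp only [smul_eq_mul]
  congr 1
  · congr 1
    exact Finset.sum_congr rfl fun i _ => qform_conj (F i) (F i) v
  · exact Finset.sum_congr rfl fun j _ => qform_conj (G j) (G j) v

lemma psd_combo (F : Fin m' → Matrix ι ι ℂ) (a : Fin m → Fin m' → ℂ) (C : ℝ)
    (hC : ∑ j, ∑ i, ‖a j i‖ ^ 2 ≤ C) :
    ((C : ℂ) • ∑ i, (F i)ᴴ * F i -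
      ∑ j, (∑ i, a j i • F i)ᴴ * (∑ i, a j i • F i)).PosSemidef := by
  rw [Matrix.posSemidef_iff_dotProduct_mulVec]
  constructor
  · show _ = _
    simp only [conjTranspose_sub, conjTranspose_smul, Matrix.conjTranspose_sum,
      conjTranspose_mul, conjTranspose_conjTranspose, Complex.star_def,
      Complex.conj_ofReal, Complex.conj_conj]
  · intro v
    set G : Fin m → Matrix ι ι ℂ := fun j => ∑ i, a j i • F i with hG
    have hGv : ∀ j, G j *ᵥ v = ∑ i, a j i • (F i *ᵥ v) := by
      intro j
      simp [hG, sum_mulVec', Matrix.smul_mulVec]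
    rw [qform_eval]
    simp only [qself, hGv]
    rw [← Complex.ofReal_sum, ← Complex.ofReal_sum, ← Complex.ofReal_mul, ← Complex.ofReal_sub,
      Complex.zero_le_real]
    have key : ∀ j, ∑ p, ‖(∑ i, a j i • (F i *ᵥ v)) p‖ ^ 2 ≤
        (∑ i, ‖a j i‖ ^ 2) * ∑ i, ∑ p, ‖(F i *ᵥ v) p‖ ^ 2 :=
      fun j => cs_key (a j) (fun i => F i *ᵥ v)
    have hnn : (0 : ℝ) ≤ ∑ i, ∑ p, ‖(F i *ᵥ v) p‖ ^ 2 :=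
      Finset.sum_nonneg fun i _ => Finset.sum_nonneg fun p _ => sq_nonneg _
    have : ∑ j, ∑ p, ‖(∑ i, a j i • (F i *ᵥ v)) p‖ ^ 2 ≤
        C * ∑ i, ∑ p, ‖(F i *ᵥ v) p‖ ^ 2 := by
      calc ∑ j, ∑ p, ‖(∑ i, a j i • (F i *ᵥ v)) p‖ ^ 2
          ≤ ∑ j, (∑ i, ‖a j i‖ ^ 2) * ∑ i, ∑ p, ‖(F i *ᵥ v) p‖ ^ 2 :=
            Finset.sum_le_sum fun j _ => key j
        _ = (∑ j, ∑ i, ‖a j i‖ ^ 2) * ∑ i, ∑ p, ‖(F i *ᵥ v) p‖ ^ 2 := by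
            rw [Finset.sum_mul]
        _ ≤ C * ∑ i, ∑ p, ‖(F i *ᵥ v) p‖ ^ 2 := mul_le_mul_of_nonneg_right hC hnn
    simp only [show ∀ j, (∑ i, a j i • F i) *ᵥ v = ∑ i, a j i • (F i *ᵥ v) from hGv]
    linarith

end CS

section Construct
variable {n : ℕ}

/-- decode `Fin (n*n)` into a pair. -/
def decn {n : ℕ} (b : Fin (n * n)) : Fin n × Fin n := finProdFinEquiv.symm b

noncomputable def Xc (b0 : Fin (n * n)) (i0 : Fin n) (g : Fin n → Fin n → ℂ) :
    Matrix (Fin (n * n) × Fin n) (Fin (n * n) × Fin n) ℂ :=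
  Matrix.of fun p p' =>
    if p.1 = b0 ∧ p.2 = i0 ∧ p'.2 = (decn p'.1).1 then g (decn p'.1).1 (decn p'.1).2 else 0

def vc (n : ℕ) : Fin (n * n) × Fin n → ℂ := fun p => if p.2 = (decn p.1).2 then 1 else 0

variable (b0 : Fin (n * n)) (i0 : Fin n) (g : Fin n → Fin n → ℂ)

lemma kr_mulVec_vc (A : Mat n) :
    kr (n * n) A *ᵥ vc n = fun p => A p.2 (decn p.1).2 := by
  funext p
  obtain ⟨b, t⟩ := p
  simp [kr, vc, mulVec, dotProduct, Fintype.sum_prod_type, ite_mul, mul_ite,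
    Finset.sum_ite_eq, Finset.sum_ite_eq']

lemma Xc_mulVec (w : Fin (n * n) × Fin n → ℂ) :
    Xc b0 i0 g *ᵥ w = fun p =>
      if p.1 = b0 ∧ p.2 = i0 then ∑ b, g (decn b).1 (decn b).2 * w (b, (decn b).1) else 0 := by
  funext p
  obtain ⟨a, s⟩ := p
  by_cases h1 : a = b0 <;> by_cases h2 : s = i0 <;>
    simp [Xc, mulVec, dotProduct, Fintype.sum_prod_type, h1, h2, ite_mul,
      Finset.sum_ite_eq, Finset.sum_ite_eq']

lemma sum_decn (h : Fin n × Fin n → ℂ) : ∑ b, h (decn b) = ∑ q, ∑ r, h (q, r) := by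
  rw [← Fintype.sum_prod_type']
  exact Fintype.sum_equiv finProdFinEquiv.symm _ _ fun b => rfl

lemma Xc_mulVec_vc (htr : ∑ q, g q q = 0) : Xc b0 i0 g *ᵥ vc n = 0 := by
  rw [Xc_mulVec]
  funext p
  have : ∑ b, g (decn b).1 (decn b).2 * vc n (b, (decn b).1)
      = ∑ q, ∑ r, g q r * (if q = r then 1 else 0) := by
    have := sum_decn (fun pr => g pr.1 pr.2 * (if pr.1 = pr.2 then 1 else 0))
    simpa [vc] using this
  simp only [this, mul_ite, mul_one, mul_zero, Finset.sum_ite_eq, Finset.mem_univ, if_true]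
  simp [htr]

lemma comp1 (A : Mat n) :
    (Xc b0 i0 g * kr (n * n) A) *ᵥ vc n = fun p =>
      if p.1 = b0 ∧ p.2 = i0 then ∑ q, ∑ r, g q r * A q r else 0 := by
  rw [← mulVec_mulVec, kr_mulVec_vc, Xc_mulVec]
  funext p
  congr 1
  have := sum_decn (fun pr => g pr.1 pr.2 * A pr.1 pr.2)
  simpa using this

lemma comp2 (A : Mat n) (htr : ∑ q, g q q = 0) :
    (kr (n * n) A * Xc b0 i0 g) *ᵥ vc n = 0 := by
  rw [← mulVec_mulVec, Xc_mulVec_vc _ _ _ htr, mulVec_zero]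

lemma commv (A : Mat n) (htr : ∑ q, g q q = 0) :
    (Xc b0 i0 g * kr (n * n) A - kr (n * n) A * Xc b0 i0 g) *ᵥ vc n = fun p =>
      if p.1 = b0 ∧ p.2 = i0 then ∑ q, ∑ r, g q r * A q r else 0 := by
  rw [sub_mulVec, comp1, comp2 _ _ _ _ htr, sub_zero]

lemma fval_eq (f : Module.Dual ℂ (Mat n)) (A : Mat n) :
    ∑ q, ∑ r, f (single q r 1) * A q r = f A := by
  conv_rhs => rw [matrix_eq_sum_single A]
  rw [map_sum]
  refine Finset.sum_congr rfl fun q _ => ?_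
  rw [map_sum]
  refine Finset.sum_congr rfl fun r _ => ?_
  rw [show single q r (A q r) = A q r • single q r 1 by
      rw [smul_single, smul_eq_mul, mul_one], _root_.map_smul, smul_eq_mul, mul_comm]

end Construct

/-- `Γ_L ≤_cp C Γ_{L'}` for some `C > 0` iff
`span{Iₙ, V₁, …, V_m} ⊆ span{Iₙ, W₁, …, W_{m'}}`. -/
theorem stmt1 (n m m' : ℕ) (H H' : Mat n) (hH : H.IsHermitian) (hH' : H'.IsHermitian)
    (V : Fin m → Mat n) (W : Fin m' → Mat n) :
    (∃ C : ℝ, 0 < C ∧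
      GradCP (fun x => (C : ℂ) • lindbladOf H' W x - lindbladOf H V x)) ↔
    Submodule.span ℂ (insert (1 : Mat n) (Set.range V)) ≤
      Submodule.span ℂ (insert (1 : Mat n) (Set.range W)) := by
  constructor
  · rintro ⟨C, hCpos, hcp⟩
    rw [Submodule.span_le]
    rintro x hx
    rcases hx with rfl | ⟨j0, rfl⟩
    · exact Submodule.subset_span (Set.mem_insert _ _)
    by_contra hnot
    rcases Nat.eq_zero_or_pos n with hn | hn
    · refine hnot ?_
      have hz : V j0 = 0 := by
        subst hn
        ext i j
        exact i.elim0
      rw [hz]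
      exact Submodule.zero_mem _
    obtain ⟨f, hf0, hfmap⟩ :=
      Submodule.exists_dual_map_eq_bot_of_notMem hnot inferInstance
    have hker : ∀ y ∈ Submodule.span ℂ (insert (1 : Mat n) (Set.range W)), f y = 0 := by
      intro y hy
      have hmem : f y ∈ (Submodule.span ℂ (insert (1 : Mat n) (Set.range W))).map f :=
        Submodule.mem_map_of_mem hy
      rw [hfmap] at hmem
      exact (Submodule.mem_bot ℂ).1 hmem
    have hf1 : f 1 = 0 := hker 1 (Submodule.subset_span (Set.mem_insert _ _))
    have hfW : ∀ i, f (W i) = 0 := fun i =>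
      hker _ (Submodule.subset_span (Set.mem_insert_iff.2 (Or.inr ⟨i, rfl⟩)))
    set g : Fin n → Fin n → ℂ := fun q r => f (single q r 1) with hg
    have hfval : ∀ A : Mat n, ∑ q, ∑ r, g q r * A q r = f A := fun A => fval_eq f A
    have htr : ∑ q, g q q = 0 := by
      have h1 := hfval 1
      simp only [Matrix.one_apply, mul_ite, mul_one, mul_zero, Finset.sum_ite_eq,
        Finset.mem_univ, if_true] at h1
      exact h1.trans hf1
    set i0 : Fin n := ⟨0, hn⟩
    set b0 : Fin (n * n) := finProdFinEquiv (i0, i0)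
    set X := Xc b0 i0 g with hX
    have hmain := hcp (n * n) X
    rw [gradFormAmp_combo, gradFormAmp_lindblad, gradFormAmp_lindblad] at hmain
    have hq := hmain.dotProduct_mulVec_nonneg (vc n)
    rw [qform_eval] at hq
    have hWv : ∀ i, (X * kr (n * n) (W i) - kr (n * n) (W i) * X) *ᵥ vc n = 0 := by
      intro i
      rw [hX, commv b0 i0 g (W i) htr]
      funext p
      rw [hfval (W i), hfW i]
      simp
    have hVv : ∀ j, (X * kr (n * n) (V j) - kr (n * n) (V j) * X) *ᵥ vc n
        = fun p => if p.1 = b0 ∧ p.2 = i0 then f (V j) else 0 := by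
      intro j
      rw [hX, commv b0 i0 g (V j) htr]
      funext p
      rw [hfval (V j)]
    simp only [hWv, hVv] at hq
    have hsum : ∀ z : ℂ,
        (∑ p : Fin (n * n) × Fin n,
          ‖(if p.1 = b0 ∧ p.2 = i0 then z else 0 : ℂ)‖ ^ 2) = ‖z‖ ^ 2 := by
      intro z
      rw [Fintype.sum_prod_type]
      simp [ite_and, apply_ite (‖·‖ : ℂ → ℝ), Finset.sum_ite_eq, Finset.sum_ite_eq']
    have hqval : ∀ j : Fin m,
        star (fun p => if p.1 = b0 ∧ p.2 = i0 then f (V j) else 0 : Fin (n * n) × Fin n → ℂ)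
          ⬝ᵥ (fun p => if p.1 = b0 ∧ p.2 = i0 then f (V j) else 0)
        = ((‖f (V j)‖ ^ 2 : ℝ) : ℂ) := by
      intro j
      rw [qself]
      norm_cast
      exact hsum (f (V j))
    simp only [hqval, dotProduct_zero, Finset.sum_const_zero, mul_zero, zero_sub] at hq
    rw [← Complex.ofReal_sum, ← Complex.ofReal_neg, Complex.zero_le_real] at hq
    have hpos : (0 : ℝ) < ∑ j, ‖f (V j)‖ ^ 2 := by
      have h0 : (0 : ℝ) < ‖f (V j0)‖ ^ 2 := by
        have := norm_pos_iff.2 hf0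
        positivity
      refine lt_of_lt_of_le h0 ?_
      exact Finset.single_le_sum (f := fun j => ‖f (V j)‖ ^ 2) (fun j _ => sq_nonneg _) (Finset.mem_univ j0)
    linarith
  · intro hspan
    have hco : ∀ j, ∃ (c : ℂ) (a : Fin m' → ℂ), V j = c • (1 : Mat n) + ∑ i, a i • W i := by
      intro j
      have hj : V j ∈ Submodule.span ℂ (insert (1 : Mat n) (Set.range W)) :=
        hspan (Submodule.subset_span (Set.mem_insert_iff.2 (Or.inr ⟨j, rfl⟩)))
      rw [Submodule.mem_span_insert] at hj
      obtain ⟨c, z, hz, hVj⟩ := hj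
      rw [Submodule.mem_span_range_iff_exists_fun] at hz
      obtain ⟨a, ha⟩ := hz
      exact ⟨c, a, by rw [hVj, ← ha]⟩
    choose co a ha using hco
    refine ⟨(∑ j, ∑ i, ‖a j i‖ ^ 2) + 1, by positivity, ?_⟩
    intro mm X
    rw [gradFormAmp_combo, gradFormAmp_lindblad, gradFormAmp_lindblad]
    have hD : ∀ j, X * kr mm (V j) - kr mm (V j) * X
        = ∑ i, a j i • (X * kr mm (W i) - kr mm (W i) * X) := by
      intro j
      rw [ha j, kr_add, kr_smul, kr_sum, kr_one]
      simp only [mul_add, add_mul, Finset.mul_sum, Finset.sum_mul, mul_smul_comm,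
        smul_mul_assoc, mul_one, one_mul, kr_smul, smul_sub, Finset.sum_sub_distrib]
      abel
    rw [show (∑ j, (X * kr mm (V j) - kr mm (V j) * X)ᴴ * (X * kr mm (V j) - kr mm (V j) * X))
        = ∑ j, (∑ i, a j i • (X * kr mm (W i) - kr mm (W i) * X))ᴴ *
            (∑ i, a j i • (X * kr mm (W i) - kr mm (W i) * X)) from
      Finset.sum_congr rfl fun j _ => by rw [hD j]]
    have hCcast : ((((∑ j, ∑ i, ‖a j i‖ ^ 2) + 1 : ℝ)) : ℂ)
        = (((∑ j, ∑ i, ‖a j i‖ ^ 2) + 1 : ℝ) : ℂ) := rfl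
    exact psd_combo (fun i => X * kr mm (W i) - kr mm (W i) * X) a _
      (by linarith [le_refl (∑ j, ∑ i, ‖a j i‖ ^ 2)])
end

section
/- Let L, L' be Lindblad generators on Mₙ(ℂ) written in standard form with jump operators {V_j}_{j=1}^m and {W_j}_{j=1}^{m'} respectively, and let Ψ_L(x) = Σ_{j=1}^m V_j* x V_j and Ψ_{L'}(x) = Σ_{j=1}^{m'} W_j* x W_j be the associated jump maps. Then for any constant C > 0: Γ_L ≤_cp C Γ_{L'} if and only if Ψ_L ≤_cp C Ψ_{L'} (i.e. C Ψ_{L'} − Ψ_L is completely positive). -/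
open Matrix
open scoped ComplexOrder Kronecker

namespace Stmt7Aux

open Matrix Finset

variable {n : ℕ}

/-- Block-diagonal amplification of a matrix. -/
noncomputable def hat (m : ℕ) {n : ℕ} (A : Mat n) :
    Matrix (Fin m × Fin n) (Fin m × Fin n) ℂ :=
  Matrix.of fun p q => if p.1 = q.1 then A p.2 q.2 else 0

lemma hat_apply {m : ℕ} (A : Mat n) (p q : Fin m × Fin n) :
    hat m A p q = if p.1 = q.1 then A p.2 q.2 else 0 := rfl

lemma hat_conjTranspose {m : ℕ} (A : Mat n) : hat m Aᴴ = (hat m A)ᴴ := by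
  ext p q
  rcases eq_or_ne p.1 q.1 with h | h
  · simp [hat_apply, h, Matrix.conjTranspose_apply]
  · simp [hat_apply, h, Ne.symm h, Matrix.conjTranspose_apply]

lemma hat_mul {m : ℕ} (A B : Mat n) : hat m (A * B) = hat m A * hat m B := by
  ext p q
  rw [Matrix.mul_apply, Fintype.sum_prod_type, Finset.sum_comm]
  simp only [hat_apply, Matrix.mul_apply, ite_mul, mul_ite, zero_mul, mul_zero,
    Finset.sum_ite_irrel, Finset.sum_const_zero, Finset.sum_ite_eq, Finset.mem_univ, if_true]
  rcases eq_or_ne p.1 q.1 with h | h <;> simp [h]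

lemma hat_one (m : ℕ) : hat m (1 : Mat n) = 1 := by
  ext p q
  rcases eq_or_ne p.1 q.1 with h | h <;> rcases eq_or_ne p.2 q.2 with h2 | h2 <;>
    simp [hat_apply, Matrix.one_apply, Prod.ext_iff, h, h2]

lemma hat_add {m : ℕ} (A B : Mat n) : hat m (A + B) = hat m A + hat m B := by
  ext p q; simp only [hat_apply, Matrix.add_apply]; split_ifs <;> simp

lemma hat_smul {m : ℕ} (c : ℂ) (A : Mat n) : hat m (c • A) = c • hat m A := by
  ext p q; simp only [hat_apply, Matrix.smul_apply]; split_ifs <;> simp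

lemma hat_sub {m : ℕ} (A B : Mat n) : hat m (A - B) = hat m A - hat m B := by
  ext p q; simp only [hat_apply, Matrix.sub_apply]; split_ifs <;> simp

lemma hat_sum {m : ℕ} {ι : Type*} [Fintype ι] (f : ι → Mat n) :
    hat m (∑ i, f i) = ∑ i, hat m (f i) := by
  ext p q; simp only [hat_apply, Matrix.sum_apply]; split_ifs <;> simp [Matrix.sum_apply]

lemma amp_apply {m : ℕ} (L : Mat n → Mat n) (X : Matrix (Fin m × Fin n) (Fin m × Fin n) ℂ)
    (p q : Fin m × Fin n) :
    amp m L X p q = L (Matrix.of fun a b => X (p.1, a) (q.1, b)) p.2 q.2 := rfl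

lemma amp_add {m : ℕ} (F G : Mat n → Mat n) (X : Matrix (Fin m × Fin n) (Fin m × Fin n) ℂ) :
    amp m (fun x => F x + G x) X = amp m F X + amp m G X := by
  ext p q; simp [amp_apply, Matrix.add_apply]

lemma amp_sub {m : ℕ} (F G : Mat n → Mat n) (X : Matrix (Fin m × Fin n) (Fin m × Fin n) ℂ) :
    amp m (fun x => F x - G x) X = amp m F X - amp m G X := by
  ext p q; simp [amp_apply, Matrix.sub_apply]

lemma amp_smul {m : ℕ} (c : ℂ) (F : Mat n → Mat n) (X : Matrix (Fin m × Fin n) (Fin m × Fin n) ℂ) :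
    amp m (fun x => c • F x) X = c • amp m F X := by
  ext p q; simp [amp_apply, Matrix.smul_apply]

lemma amp_sum {m : ℕ} {ι : Type*} [Fintype ι] (F : ι → Mat n → Mat n)
    (X : Matrix (Fin m × Fin n) (Fin m × Fin n) ℂ) :
    amp m (fun x => ∑ i, F i x) X = ∑ i, amp m (F i) X := by
  ext p q; simp [amp_apply, Matrix.sum_apply]

lemma amp_congr {m : ℕ} {F G : Mat n → Mat n} (h : ∀ x, F x = G x)
    (X : Matrix (Fin m × Fin n) (Fin m × Fin n) ℂ) : amp m F X = amp m G X := by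
  rw [show F = G from funext h]

lemma amp_sandwich {m : ℕ} (A B : Mat n) (X : Matrix (Fin m × Fin n) (Fin m × Fin n) ℂ) :
    amp m (fun x => A * x * B) X = hat m A * X * hat m B := by
  ext p q
  rw [Matrix.mul_apply, Fintype.sum_prod_type]
  simp only [amp_apply, Matrix.mul_apply, Matrix.of_apply, hat_apply, ite_mul, mul_ite,
    zero_mul, mul_zero, Fintype.sum_prod_type, Finset.sum_ite_irrel, Finset.sum_const_zero,
    Finset.sum_ite_eq, Finset.sum_ite_eq', Finset.mem_univ, if_true, Finset.sum_mul]

lemma amp_lmul {m : ℕ} (A : Mat n) (X : Matrix (Fin m × Fin n) (Fin m × Fin n) ℂ) :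
    amp m (fun x => A * x) X = hat m A * X := by
  have h : (fun x : Mat n => A * x) = fun x => A * x * 1 := by funext x; rw [mul_one]
  rw [h, amp_sandwich, hat_one, mul_one]

lemma amp_rmul {m : ℕ} (B : Mat n) (X : Matrix (Fin m × Fin n) (Fin m × Fin n) ℂ) :
    amp m (fun x => x * B) X = X * hat m B := by
  have h : (fun x : Mat n => x * B) = fun x => 1 * x * B := by funext x; rw [one_mul]
  rw [h, amp_sandwich, hat_one, one_mul]

end Stmt7Aux
namespace Stmt7Aux

open Matrix Finset

variable {n : ℕ}

lemma amp_lindblad {m : ℕ} (H : Mat n) {mV : ℕ} (V : Fin mV → Mat n)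
    (X : Matrix (Fin m × Fin n) (Fin m × Fin n) ℂ) :
    amp m (lindbladOf H V) X =
      Complex.I • (hat m H * X - X * hat m H) +
        ∑ j, ((hat m (V j))ᴴ * X * hat m (V j) -
          (2⁻¹ : ℂ) • ((hat m (V j))ᴴ * hat m (V j) * X + X * ((hat m (V j))ᴴ * hat m (V j)))) := by
  unfold lindbladOf
  simp only [amp_add, amp_smul, amp_sub, amp_sum, amp_sandwich, amp_lmul, amp_rmul,
    hat_mul, hat_conjTranspose]

lemma gform_formula {N κ₁ κ₂ : Type*} [Fintype N] [DecidableEq N] [Fintype κ₁] [Fintype κ₂]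
    (c : ℂ) (K₁ K₂ : Matrix N N ℂ) (Wb : κ₁ → Matrix N N ℂ) (Vb : κ₂ → Matrix N N ℂ)
    (L : Matrix N N ℂ → Matrix N N ℂ)
    (hL : ∀ Z, L Z = c • (Complex.I • (K₁ * Z - Z * K₁) +
        ∑ k, ((Wb k)ᴴ * Z * Wb k - (2⁻¹ : ℂ) • ((Wb k)ᴴ * Wb k * Z + Z * ((Wb k)ᴴ * Wb k))))
      - (Complex.I • (K₂ * Z - Z * K₂) +
        ∑ j, ((Vb j)ᴴ * Z * Vb j - (2⁻¹ : ℂ) • ((Vb j)ᴴ * Vb j * Z + Z * ((Vb j)ᴴ * Vb j)))))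
    (X : Matrix N N ℂ) :
    L (Xᴴ * X) - L Xᴴ * X - Xᴴ * L X
      = c • ∑ k, (X * Wb k - Wb k * X)ᴴ * (X * Wb k - Wb k * X)
        - ∑ j, (X * Vb j - Vb j * X)ᴴ * (X * Vb j - Vb j * X) := by
  rw [hL, hL, hL]
  simp only [conjTranspose_sub, conjTranspose_mul, conjTranspose_conjTranspose,
    smul_add, smul_sub, sub_mul, add_mul, mul_sub, mul_add, smul_mul_assoc, mul_smul_comm,
    Finset.sum_mul, Finset.mul_sum, Finset.sum_sub_distrib, Finset.sum_add_distrib,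
    ← Finset.smul_sum, mul_assoc]
  module

end Stmt7Aux
namespace Stmt7Aux

open Matrix Finset

variable {n : ℕ}

lemma formula1 (C : ℝ) (H H' : Mat n) {mV mW : ℕ} (V : Fin mV → Mat n) (W : Fin mW → Mat n)
    (m : ℕ) (X : Matrix (Fin m × Fin n) (Fin m × Fin n) ℂ) :
    gradFormAmp m (fun x => (C : ℂ) • lindbladOf H' W x - lindbladOf H V x) X X
      = (C : ℂ) • ∑ k, (X * hat m (W k) - hat m (W k) * X)ᴴ * (X * hat m (W k) - hat m (W k) * X)
        - ∑ j, (X * hat m (V j) - hat m (V j) * X)ᴴ * (X * hat m (V j) - hat m (V j) * X) := by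
  have hamp : ∀ Z : Matrix (Fin m × Fin n) (Fin m × Fin n) ℂ,
      amp m (fun x => (C : ℂ) • lindbladOf H' W x - lindbladOf H V x) Z
      = (C : ℂ) • (Complex.I • (hat m H' * Z - Z * hat m H') +
          ∑ k, ((hat m (W k))ᴴ * Z * hat m (W k) -
            (2⁻¹ : ℂ) • ((hat m (W k))ᴴ * hat m (W k) * Z + Z * ((hat m (W k))ᴴ * hat m (W k)))))
        - (Complex.I • (hat m H * Z - Z * hat m H) +
          ∑ j, ((hat m (V j))ᴴ * Z * hat m (V j) -
            (2⁻¹ : ℂ) • ((hat m (V j))ᴴ * hat m (V j) * Z + Z * ((hat m (V j))ᴴ * hat m (V j))))) := by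
    intro Z
    rw [amp_sub, amp_smul, amp_lindblad, amp_lindblad]
  unfold gradFormAmp
  exact gform_formula (C : ℂ) (hat m H') (hat m H) (fun k => hat m (W k)) (fun j => hat m (V j))
    _ hamp X

lemma quad_expand {N : Type*} [Fintype N] [DecidableEq N] {κ : Type*} [Fintype κ]
    (A : κ → Matrix N N ℂ) (X : Matrix N N ℂ) :
    ∑ l, (X * A l - A l * X)ᴴ * (X * A l - A l * X)
      = (∑ l, (A l)ᴴ * (Xᴴ * X) * A l) - (∑ l, (A l)ᴴ * Xᴴ * A l) * X
        - Xᴴ * (∑ l, (A l)ᴴ * X * A l) + Xᴴ * (∑ l, (A l)ᴴ * 1 * A l) * X := by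
  simp only [conjTranspose_sub, conjTranspose_mul, conjTranspose_conjTranspose,
    sub_mul, mul_sub, add_mul, mul_add, Finset.sum_mul, Finset.mul_sum,
    Finset.sum_sub_distrib, Finset.sum_add_distrib, mul_assoc, mul_one, one_mul]
  module

lemma kraus_formula {N κ₁ κ₂ κ₃ : Type*} [Fintype N] [DecidableEq N]
    [Fintype κ₁] [Fintype κ₂] [Fintype κ₃]
    (c : ℂ) (Wb : κ₁ → Matrix N N ℂ) (Vb : κ₂ → Matrix N N ℂ) (Sb : κ₃ → Matrix N N ℂ)
    (hrep : ∀ Z : Matrix N N ℂ,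
      c • ∑ k, (Wb k)ᴴ * Z * Wb k - ∑ j, (Vb j)ᴴ * Z * Vb j = ∑ l, (Sb l)ᴴ * Z * Sb l)
    (X : Matrix N N ℂ) :
    c • ∑ k, (X * Wb k - Wb k * X)ᴴ * (X * Wb k - Wb k * X)
      - ∑ j, (X * Vb j - Vb j * X)ᴴ * (X * Vb j - Vb j * X)
    = ∑ l, (X * Sb l - Sb l * X)ᴴ * (X * Sb l - Sb l * X) := by
  rw [quad_expand Wb X, quad_expand Vb X, quad_expand Sb X, ← hrep (Xᴴ * X), ← hrep Xᴴ, ← hrep X, ← hrep 1]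
  simp only [smul_sub, sub_mul, mul_sub, smul_mul_assoc, mul_smul_comm]
  module

end Stmt7Aux
namespace Stmt7Aux

open Matrix Finset

variable {n : ℕ}

/-- The Choi matrix of a map on `Mₙ(ℂ)`. -/
noncomputable def choi {n : ℕ} (Φ : Mat n → Mat n) :
    Matrix (Fin n × Fin n) (Fin n × Fin n) ℂ :=
  Matrix.of fun p q => Φ (Matrix.single p.1 q.1 1) p.2 q.2

/-- Rank-one Choi block of a single jump operator. -/
noncomputable def rank1 {n : ℕ} (A : Mat n) : Matrix (Fin n × Fin n) (Fin n × Fin n) ℂ :=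
  Matrix.of fun p q => star (A p.1 p.2) * A q.1 q.2

lemma sandwich_apply (A B x : Mat n) (a b : Fin n) :
    (Aᴴ * x * B) a b = ∑ r, ∑ s, star (A r a) * x r s * B s b := by
  rw [Matrix.mul_apply]
  simp only [Matrix.mul_apply, conjTranspose_apply, Finset.sum_mul]
  rw [Finset.sum_comm]

lemma sandwich_std (A B : Mat n) (r s a b : Fin n) :
    (Aᴴ * Matrix.single r s (1 : ℂ) * B) a b = star (A r a) * B s b := by
  rw [sandwich_apply]
  simp only [Matrix.single, Matrix.of_apply, mul_ite, ite_mul, mul_one, mul_zero,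
    zero_mul, ite_and, Finset.sum_ite_irrel, Finset.sum_const_zero, Finset.sum_ite_eq,
    Finset.mem_univ, if_true]

lemma choi_phi (C : ℝ) {mV mW : ℕ} (V : Fin mV → Mat n) (W : Fin mW → Mat n) :
    choi (fun x => (C : ℂ) • jumpMap W x - jumpMap V x)
      = (C : ℂ) • ∑ k, rank1 (W k) - ∑ j, rank1 (V j) := by
  ext p q
  simp [choi, rank1, jumpMap, Matrix.sub_apply, Matrix.smul_apply, Matrix.sum_apply,
    sandwich_std, smul_eq_mul]

lemma rank1_herm (A : Mat n) : (rank1 A).IsHermitian := by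
  unfold Matrix.IsHermitian
  ext p q
  simp [rank1, conjTranspose_apply, mul_comm]

lemma psd_zero {N : Type*} [Fintype N] : (0 : Matrix N N ℂ).PosSemidef := by
  constructor
  · simp [Matrix.IsHermitian]
  · intro x; simp

lemma psd_sum {N ι : Type*} [Fintype N] [Fintype ι] (f : ι → Matrix N N ℂ)
    (h : ∀ i, (f i).PosSemidef) : (∑ i, f i).PosSemidef := by
  classical
  refine Finset.sum_induction f _ (fun a b ha hb => ha.add hb) psd_zero (fun i _ => h i)

lemma dot_conj {N : Type*} [Fintype N] (M : Matrix N N ℂ) (v : N → ℂ) :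
    star v ⬝ᵥ ((Mᴴ * M) *ᵥ v) = star (M *ᵥ v) ⬝ᵥ (M *ᵥ v) := by
  rw [← Matrix.mulVec_mulVec, dotProduct_mulVec, ← Matrix.star_mulVec]

lemma sum_mulVec {N ι : Type*} [Fintype N] [Fintype ι] (f : ι → Matrix N N ℂ) (v : N → ℂ) :
    (∑ i, f i) *ᵥ v = ∑ i, f i *ᵥ v := by
  ext j
  simp only [Matrix.mulVec, dotProduct, Matrix.sum_apply, Finset.sum_mul,
    Finset.sum_apply]
  rw [Finset.sum_comm]

lemma dotProduct_sum' {N ι : Type*} [Fintype N] [Fintype ι] (v : N → ℂ) (f : ι → N → ℂ) :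
    v ⬝ᵥ (∑ i, f i) = ∑ i, v ⬝ᵥ f i := by
  simp [dotProduct, Finset.mul_sum, Finset.sum_apply]
  rw [Finset.sum_comm]

lemma linear_expand (Φ : Mat n → Mat n) (hΦ : IsLinearMap ℂ Φ) (x : Mat n) :
    Φ x = ∑ r, ∑ s, x r s • Φ (Matrix.single r s 1) := by
  let f : Mat n →ₗ[ℂ] Mat n := IsLinearMap.mk' Φ hΦ
  have hf : Φ = f := rfl
  rw [hf]
  conv_lhs => rw [matrix_eq_sum_single x]
  rw [map_sum]
  refine Finset.sum_congr rfl fun r _ => ?_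
  rw [map_sum]
  refine Finset.sum_congr rfl fun s _ => ?_
  have hs : Matrix.single r s (x r s) = x r s • Matrix.single r s 1 := by
    simp [Matrix.smul_single]
  rw [hs]
  exact _root_.map_smul f (x r s) (Matrix.single r s 1)

lemma phi_lin (C : ℝ) {mV mW : ℕ} (V : Fin mV → Mat n) (W : Fin mW → Mat n) :
    IsLinearMap ℂ (fun x : Mat n => (C : ℂ) • jumpMap W x - jumpMap V x) := by
  constructor
  · intro x y
    simp only [jumpMap, mul_add, add_mul, Finset.sum_add_distrib, smul_add]
    module
  · intro c x
    simp only [jumpMap, Matrix.mul_smul, Matrix.smul_mul, ← Finset.smul_sum, smul_sub,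
      smul_smul, mul_comm]

end Stmt7Aux
namespace Stmt7Aux

open Matrix Finset

variable {n : ℕ}

lemma choi_entry_eq (C : ℝ) {mV mW : ℕ} (V : Fin mV → Mat n) (W : Fin mW → Mat n)
    {B : Matrix (Fin n × Fin n) (Fin n × Fin n) ℂ}
    (hB : choi (fun x : Mat n => (C : ℂ) • jumpMap W x - jumpMap V x) = Bᴴ * B)
    (r s a b : Fin n) :
    ((C : ℂ) • jumpMap W (Matrix.single r s 1)
      - jumpMap V (Matrix.single r s 1)) a b
      = ∑ l, star (B l (r, a)) * B l (s, b) := by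
  have h : choi (fun x : Mat n => (C : ℂ) • jumpMap W x - jumpMap V x) (r, a) (s, b)
      = (Bᴴ * B) (r, a) (s, b) := by rw [hB]
  simpa [choi, Matrix.mul_apply, conjTranspose_apply] using h

lemma kraus_exists (C : ℝ) {mV mW : ℕ} (V : Fin mV → Mat n) (W : Fin mW → Mat n)
    (hpsd : (choi (fun x : Mat n => (C : ℂ) • jumpMap W x - jumpMap V x)).PosSemidef) :
    ∃ S : (Fin n × Fin n) → Mat n, ∀ x : Mat n,
      (C : ℂ) • jumpMap W x - jumpMap V x = ∑ l, (S l)ᴴ * x * S l := by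
  obtain ⟨B, hB⟩ := by
    open scoped MatrixOrder in
    exact CStarAlgebra.nonneg_iff_eq_star_mul_self.mp hpsd.nonneg
  refine ⟨fun l => Matrix.of fun r c => B l (r, c), fun x => ?_⟩
  have hexp : (C : ℂ) • jumpMap W x - jumpMap V x
      = ∑ r, ∑ s, x r s • ((C : ℂ) • jumpMap W (Matrix.single r s 1)
          - jumpMap V (Matrix.single r s 1)) := by
    simpa using linear_expand _ (phi_lin C V W) x
  rw [hexp]
  ext a b
  simp only [Matrix.sum_apply, Matrix.smul_apply, smul_eq_mul, sandwich_apply, Matrix.of_apply]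
  have key : (∑ l : Fin n × Fin n, ∑ r, ∑ s, star (B l (r, a)) * x r s * B l (s, b))
      = ∑ r, ∑ s, ∑ l : Fin n × Fin n, star (B l (r, a)) * x r s * B l (s, b) := by
    rw [Finset.sum_comm]
    exact Finset.sum_congr rfl fun r _ => Finset.sum_comm
  rw [key]
  refine Finset.sum_congr rfl fun r _ => Finset.sum_congr rfl fun s _ => ?_
  rw [choi_entry_eq C V W hB, Finset.mul_sum]
  exact Finset.sum_congr rfl fun l _ => by ring

lemma cp_of_kraus (Φ : Mat n → Mat n) (S : (Fin n × Fin n) → Mat n)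
    (hK : ∀ x, Φ x = ∑ l, (S l)ᴴ * x * S l) : IsCPMap Φ := by
  intro m X hX
  have hamp : amp m Φ X = ∑ l, (hat m (S l))ᴴ * X * hat m (S l) := by
    rw [amp_congr hK, amp_sum]
    refine Finset.sum_congr rfl fun l _ => ?_
    rw [← hat_conjTranspose, amp_sandwich]
  rw [hamp]
  exact psd_sum _ fun l => hX.conjTranspose_mul_mul_same (hat m (S l))

lemma choi_psd_of_cp (hn : 0 < n) (Φ : Mat n → Mat n) (h : IsCPMap Φ) :
    (choi Φ).PosSemidef := by
  set z0 : Fin n := ⟨0, hn⟩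
  set e : Fin n × Fin n → ℂ := fun p => if p.1 = p.2 then 1 else 0 with he
  set B0 : Matrix (Fin n × Fin n) (Fin n × Fin n) ℂ :=
    Matrix.of fun l p => if l = (z0, z0) then star (e p) else 0 with hB0
  have hE : amp n Φ (B0ᴴ * B0) = choi Φ := by
    ext p q
    rw [amp_apply, choi]
    have hblk : (Matrix.of fun a b => (B0ᴴ * B0) (p.1, a) (q.1, b))
        = Matrix.single p.1 q.1 (1 : ℂ) := by
      ext a b
      simp only [Matrix.of_apply, Matrix.mul_apply, conjTranspose_apply, hB0, he,
        Matrix.single]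
      rw [Finset.sum_eq_single (z0, z0)]
      · by_cases h1 : p.1 = a <;> by_cases h2 : q.1 = b <;> simp [h1, h2]
      · intro c _ hc; simp [hc]
      · intro hc; exact absurd (Finset.mem_univ _) hc
    rw [hblk]
    rfl
  have := h n (B0ᴴ * B0) (posSemidef_conjTranspose_mul_self B0)
  rwa [hE] at this

lemma hrep_big (C : ℝ) {mV mW : ℕ} (V : Fin mV → Mat n) (W : Fin mW → Mat n)
    (S : (Fin n × Fin n) → Mat n)
    (hK : ∀ x : Mat n, (C : ℂ) • jumpMap W x - jumpMap V x = ∑ l, (S l)ᴴ * x * S l)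
    (m : ℕ) (Z : Matrix (Fin m × Fin n) (Fin m × Fin n) ℂ) :
    (C : ℂ) • ∑ k, (hat m (W k))ᴴ * Z * hat m (W k)
      - ∑ j, (hat m (V j))ᴴ * Z * hat m (V j)
      = ∑ l, (hat m (S l))ᴴ * Z * hat m (S l) := by
  have h1 : ∀ {κ : Type} [Fintype κ], ∀ (A : κ → Mat n),
      (∑ l, (hat m (A l))ᴴ * Z * hat m (A l)) = amp m (fun x => ∑ l, (A l)ᴴ * x * A l) Z := by
    intro κ _ A
    rw [amp_sum]
    refine Finset.sum_congr rfl fun l _ => ?_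
    rw [← hat_conjTranspose, amp_sandwich]
  rw [h1 W, h1 V, h1 S]
  have h2 : ∀ x : Mat n, (C : ℂ) • jumpMap W x - jumpMap V x
      = (C : ℂ) • (∑ k, (W k)ᴴ * x * W k) - ∑ j, (V j)ᴴ * x * V j := by
    intro x; rfl
  calc (C : ℂ) • amp m (fun x => ∑ k, (W k)ᴴ * x * W k) Z
        - amp m (fun x => ∑ j, (V j)ᴴ * x * V j) Z
      = amp m (fun x => (C : ℂ) • jumpMap W x - jumpMap V x) Z := by
        rw [amp_congr h2, amp_sub, amp_smul]
    _ = amp m (fun x => ∑ l, (S l)ᴴ * x * S l) Z := amp_congr hK Z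
end Stmt7Aux
namespace Stmt7Aux

open Matrix Finset

variable {n : ℕ}

lemma choi_phi_herm (C : ℝ) {mV mW : ℕ} (V : Fin mV → Mat n) (W : Fin mW → Mat n) :
    ((C : ℂ) • ∑ k, rank1 (W k) - ∑ j, rank1 (V j)).IsHermitian := by
  have h1 : (∑ k, rank1 (W k))ᴴ = ∑ k, rank1 (W k) := by
    rw [conjTranspose_sum]
    exact Finset.sum_congr rfl fun k _ => rank1_herm (W k)
  have h2 : (∑ j, rank1 (V j))ᴴ = ∑ j, rank1 (V j) := by
    rw [conjTranspose_sum]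
    exact Finset.sum_congr rfl fun j _ => rank1_herm (V j)
  show _ = _
  rw [conjTranspose_sub, conjTranspose_smul, h1, h2, Complex.star_def, Complex.conj_ofReal]

lemma star_sum' {ι : Type*} [Fintype ι] (f : ι → ℂ) : star (∑ i, f i) = ∑ i, star (f i) := by
  exact star_sum _ _

lemma rank1_quad (A : Mat n) (u : Fin n × Fin n → ℂ) :
    star u ⬝ᵥ (rank1 A *ᵥ u)
      = star (∑ q : Fin n × Fin n, A q.1 q.2 * u q) * (∑ q : Fin n × Fin n, A q.1 q.2 * u q) := by
  rw [star_sum', Finset.sum_mul_sum]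
  simp only [dotProduct, Matrix.mulVec, rank1, Matrix.of_apply, Finset.mul_sum,
    Pi.star_apply]
  refine Finset.sum_congr rfl fun p _ => Finset.sum_congr rfl fun q _ => ?_
  simp only [star_mul']
  ring

/-- The diagonal test vector. -/
def zeta (n : ℕ) : Fin n × Fin n → ℂ := fun p => if p.1 = p.2 then 1 else 0

/-- Traceless version of a functional matrix. -/
noncomputable def Ymat (u : Fin n × Fin n → ℂ) (c0 : ℂ) : Mat n :=
  Matrix.of fun i b => u (b, i) - (if i = b then c0 else 0)

/-- The rank-one test matrix. -/
noncomputable def Xmat (z0 : Fin n) (Y : Mat n) :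
    Matrix (Fin n × Fin n) (Fin n × Fin n) ℂ :=
  Matrix.of fun p q => if p = (z0, z0) then Y q.1 q.2 else 0

lemma hatA_mulVec_zeta (A : Mat n) : hat n A *ᵥ zeta n = fun p => A p.2 p.1 := by
  funext p
  simp only [Matrix.mulVec, dotProduct, hat_apply, zeta, Fintype.sum_prod_type,
    ite_mul, mul_ite, mul_one, mul_zero, zero_mul, Finset.sum_ite_irrel, Finset.sum_const_zero,
    Finset.sum_ite_eq, Finset.sum_ite_eq', Finset.mem_univ, if_true]

lemma Xmat_mulVec (z0 : Fin n) (Y : Mat n) (w : Fin n × Fin n → ℂ) :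
    Xmat z0 Y *ᵥ w
      = fun p => if p = (z0, z0) then (∑ q : Fin n × Fin n, Y q.1 q.2 * w q) else 0 := by
  funext p
  simp only [Matrix.mulVec, dotProduct, Xmat, Matrix.of_apply, ite_mul, zero_mul,
    Finset.sum_ite_irrel, Finset.sum_const_zero]

lemma zeta_sum (Y : Mat n) : (∑ q : Fin n × Fin n, Y q.1 q.2 * zeta n q) = ∑ i, Y i i := by
  simp only [zeta, Fintype.sum_prod_type, mul_ite, mul_one, mul_zero]
  exact Finset.sum_congr rfl fun i _ => by simp [Finset.sum_ite_eq']

lemma Dvec (z0 : Fin n) (Y : Mat n) (hY : (∑ i, Y i i) = 0) (A : Mat n) :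
    (Xmat z0 Y * hat n A - hat n A * Xmat z0 Y) *ᵥ zeta n
      = fun p => if p = (z0, z0) then (∑ q : Fin n × Fin n, Y q.1 q.2 * A q.2 q.1) else 0 := by
  have hXz : Xmat z0 Y *ᵥ zeta n = 0 := by
    rw [Xmat_mulVec, zeta_sum, hY]
    funext p; simp
  rw [Matrix.sub_mulVec, ← Matrix.mulVec_mulVec, ← Matrix.mulVec_mulVec, hXz,
    Matrix.mulVec_zero, hatA_mulVec_zeta, Xmat_mulVec]
  funext p; simp

lemma dot_delta (t : ℂ) (z : Fin n × Fin n) :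
    star (fun p : Fin n × Fin n => if p = z then t else 0)
      ⬝ᵥ (fun p : Fin n × Fin n => if p = z then t else 0) = star t * t := by
  simp only [dotProduct, Pi.star_apply, apply_ite, star_zero, ite_mul, zero_mul,
    mul_ite, mul_zero]
  simp [Finset.sum_ite_eq']

lemma Ymat_pair (u : Fin n × Fin n → ℂ) (c0 : ℂ) (A : Mat n) (hA : Matrix.trace A = 0) :
    (∑ q : Fin n × Fin n, (Ymat u c0) q.1 q.2 * A q.2 q.1)
      = ∑ q : Fin n × Fin n, A q.1 q.2 * u q := by
  have htr : (∑ i, A i i) = 0 := hA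
  simp only [Ymat, Matrix.of_apply, sub_mul, Finset.sum_sub_distrib, ite_mul, zero_mul]
  have h2 : (∑ q : Fin n × Fin n, if q.1 = q.2 then c0 * A q.2 q.1 else 0) = 0 := by
    rw [Fintype.sum_prod_type]
    simp only [Finset.sum_ite_eq, Finset.mem_univ, if_true]
    rw [← Finset.mul_sum, htr, mul_zero]
  rw [h2, sub_zero, Fintype.sum_prod_type, Finset.sum_comm, Fintype.sum_prod_type]
  exact Finset.sum_congr rfl fun a _ => Finset.sum_congr rfl fun b _ => by ring

end Stmt7Aux
namespace Stmt7Aux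

open Matrix Finset

variable {n : ℕ}

lemma psd_of_isEmpty {N : Type*} [Fintype N] [IsEmpty N] (M : Matrix N N ℂ) : M.PosSemidef := by
  constructor
  · ext p q; exact (IsEmpty.false p).elim
  · intro x; simp [dotProduct, Finset.univ_eq_empty, Subsingleton.elim x 0]

lemma choi_psd_of_grad (hn : 0 < n) (C : ℝ) (H H' : Mat n) {mV mW : ℕ}
    (V : Fin mV → Mat n) (W : Fin mW → Mat n)
    (hV1 : ∀ j, Matrix.trace (V j) = 0) (hW1 : ∀ k, Matrix.trace (W k) = 0)
    (hgrad : GradCP (fun x => (C : ℂ) • lindbladOf H' W x - lindbladOf H V x)) :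
    (choi (fun x : Mat n => (C : ℂ) • jumpMap W x - jumpMap V x)).PosSemidef := by
  rw [choi_phi]
  refine .of_dotProduct_mulVec_nonneg (choi_phi_herm C V W) fun u => ?_
  set z0 : Fin n := ⟨0, hn⟩ with hz0
  set c0 : ℂ := (∑ t, u (t, t)) / n with hc0
  set Y : Mat n := Ymat u c0 with hYdef
  have hYtr : (∑ i, Y i i) = 0 := by
    have hne : (n : ℂ) ≠ 0 := Nat.cast_ne_zero.mpr hn.ne'
    simp only [hYdef, Ymat, Matrix.of_apply, Finset.sum_sub_distrib, eq_self_iff_true, if_true,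
      Finset.sum_const, Finset.card_univ, Fintype.card_fin, nsmul_eq_mul, hc0]
    rw [mul_div_cancel₀ _ hne, sub_self]
  set X := Xmat z0 Y with hX
  have h0 := (hgrad n X).dotProduct_mulVec_nonneg (zeta n)
  rw [formula1 C H H' V W n X] at h0
  have hG : ∀ A : Mat n, Matrix.trace A = 0 →
      star (zeta n) ⬝ᵥ (((X * hat n A - hat n A * X)ᴴ * (X * hat n A - hat n A * X)) *ᵥ zeta n)
        = star (∑ q : Fin n × Fin n, A q.1 q.2 * u q)
            * (∑ q : Fin n × Fin n, A q.1 q.2 * u q) := by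
    intro A hA
    rw [hX, dot_conj, Dvec z0 Y hYtr A, dot_delta, hYdef, Ymat_pair u c0 A hA]
  rw [Matrix.sub_mulVec, Matrix.smul_mulVec, sum_mulVec, sum_mulVec, dotProduct_sub,
    dotProduct_smul, dotProduct_sum', dotProduct_sum', smul_eq_mul] at h0
  rw [Finset.sum_congr rfl (fun k _ => hG (W k) (hW1 k)),
    Finset.sum_congr rfl (fun j _ => hG (V j) (hV1 j))] at h0
  rw [Matrix.sub_mulVec, Matrix.smul_mulVec, sum_mulVec, sum_mulVec, dotProduct_sub,
    dotProduct_smul, dotProduct_sum', dotProduct_sum', smul_eq_mul,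
    Finset.sum_congr rfl (fun k _ => rank1_quad (W k) u),
    Finset.sum_congr rfl (fun j _ => rank1_quad (V j) u)]
  exact h0

end Stmt7Aux


/-- for Lindblad generators in standard form,
`Γ_L ≤_cp C Γ_{L'}` iff `Ψ_L ≤_cp C Ψ_{L'}`. -/
theorem stmt7 (n m m' : ℕ) (H H' : Mat n) (hH : H.IsHermitian) (hH' : H'.IsHermitian)
    (V : Fin m → Mat n) (W : Fin m' → Mat n) (hV : StdJump V) (hW : StdJump W)
    (C : ℝ) (hC : 0 < C) :
    GradCP (fun x => (C : ℂ) • lindbladOf H' W x - lindbladOf H V x) ↔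
    IsCPMap (fun x => (C : ℂ) • jumpMap W x - jumpMap V x) := by
  constructor
  · intro hgrad
    rcases Nat.eq_zero_or_pos n with hn | hn
    · subst hn
      intro mm X _
      exact Stmt7Aux.psd_of_isEmpty _
    · obtain ⟨S, hS⟩ := Stmt7Aux.kraus_exists C V W
        (Stmt7Aux.choi_psd_of_grad hn C H H' V W hV.1 hW.1 hgrad)
      exact Stmt7Aux.cp_of_kraus _ S hS
  · intro hcp
    rcases Nat.eq_zero_or_pos n with hn | hn
    · subst hn
      intro mm X
      exact Stmt7Aux.psd_of_isEmpty _
    · obtain ⟨S, hS⟩ := Stmt7Aux.kraus_exists C V W (Stmt7Aux.choi_psd_of_cp hn _ hcp)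
      intro mm X
      rw [Stmt7Aux.formula1 C H H' V W mm X,
        Stmt7Aux.kraus_formula (C : ℂ) (fun k => Stmt7Aux.hat mm (W k))
          (fun j => Stmt7Aux.hat mm (V j)) (fun l => Stmt7Aux.hat mm (S l))
          (Stmt7Aux.hrep_big C V W S hS mm) X]
      exact Stmt7Aux.psd_sum _ fun l => Matrix.posSemidef_conjTranspose_mul_self _
end

section
/- Let L, L' be Lindblad generators on Mₙ(ℂ) and let E_τ(x) = τ(x) Iₙ with τ = Tr/n. If for every r > 0 the block matrix m_{L−L'} + r·m_{−(I−E_τ)} ∈ M_{n²}(Mₙ(ℂ)) is positive semidefinite, then m_{L−L'} is positive semidefinite (equivalently, the gradient form of L − L' is completely positive). In other words, m_{−(I−E_τ)} is an Archimedean order unit for the cone of gradient matrices of Lindblad generators. -/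
open Matrix
open scoped ComplexOrder Kronecker

/-- `m_{−(I−E_τ)}` is an Archimedean order unit: if
`m_{L−L'} + r·m_{−(I−E_τ)} ≥ 0` for all `r > 0`, then `m_{L−L'} ≥ 0`. -/
theorem stmt13 (n : ℕ) (L L' : Mat n → Mat n) (hL : IsLindblad L) (hL' : IsLindblad L')
    (h : ∀ r : ℝ, 0 < r →
      (gradMatrix (fun x => L x - L' x) + (r : ℂ) • gradMatrix (etauGen n)).PosSemidef) :
    (gradMatrix (fun x => L x - L' x)).PosSemidef := by
  set M := gradMatrix (n := n) (fun x => L x - L' x) with hM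
  set N := gradMatrix (etauGen n) with hN
  have h1 := h 1 one_pos
  have h2 := h 2 two_pos
  simp only [Complex.ofReal_one, one_smul] at h1
  -- Hermitian part
  have hNh : N.IsHermitian := by
    have := h2.1.sub h1.1
    have e : (M + ((2:ℝ) : ℂ) • N) - (M + N) = N := by
      push_cast
      module
    rw [e] at this
    exact this
  have hMh : M.IsHermitian := by
    have := h1.1.sub hNh
    simpa using this
  refine PosSemidef.of_dotProduct_mulVec_nonneg hMh fun v => ?_
  set a : ℂ := star v ⬝ᵥ M *ᵥ v with ha
  set b : ℂ := star v ⬝ᵥ N *ᵥ v with hb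
  have key : ∀ r : ℝ, 0 < r → 0 ≤ a + (r : ℂ) * b := by
    intro r hr
    have := (h r hr).dotProduct_mulVec_nonneg v
    have e : star v ⬝ᵥ (M + (r : ℂ) • N) *ᵥ v = a + (r : ℂ) * b := by
      simp [add_mulVec, smul_mulVec, dotProduct_add, dotProduct_smul, ha, hb,
        smul_eq_mul]
    rwa [e] at this
  rw [Complex.le_def]
  simp only [Complex.le_def, Complex.zero_re, Complex.zero_im] at key
  constructor
  · -- real part
    have hre : ∀ r : ℝ, 0 < r → 0 ≤ a.re + r * b.re := by
      intro r hr
      have := (key r hr).1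
      simpa [Complex.add_re, Complex.mul_re, Complex.ofReal_re, Complex.ofReal_im] using this
    have : -a.re ≤ 0 := by
      refine le_of_forall_pos_le_add fun ε hε => ?_
      rcases le_or_gt b.re 0 with hbr | hbr
      · have := hre ε hε
        nlinarith
      · have hr : 0 < ε / b.re := div_pos hε hbr
        have := hre (ε / b.re) hr
        have : 0 ≤ a.re + ε := by
          field_simp at this
          nlinarith
        linarith
    simpa using neg_nonpos.mp this
  · -- imaginary part
    have him : ∀ r : ℝ, 0 < r → a.im + r * b.im = 0 := by
      intro r hr
      have := (key r hr).2
      simp only [Complex.add_im, Complex.mul_im, Complex.ofReal_re, Complex.ofReal_im,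
        zero_mul, add_zero] at this
      linarith
    have e1 := him 1 one_pos
    have e2 := him 2 two_pos
    have : a.im = 0 := by linarith
    simp [this]
end

section
/- Let σ be a positive definite density matrix, let L, L' be Lindblad generators on Mₙ(ℂ) satisfying σ-detailed balance, and let C > 0. If Γ_L ≤_cp C Γ_{L'}, then the associated BKM Dirichlet forms satisfy E_L(X) ≤ C E_{L'}(X) for every X ∈ Mₙ(ℂ), where E_L(X) = −∫₀¹ Tr(X* σˢ L(X) σ^{1−s}) ds. -/
open Matrix
open scoped ComplexOrder Kronecker

open Matrix
open scoped ComplexOrder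

/-- Functional calculus for hermitian matrices: `fnCalc f A = U (diag (f ∘ eigenvalues)) U*`
when `A` is hermitian (and `0` otherwise). -/
noncomputable def fnCalc {ι : Type*} [Fintype ι] [DecidableEq ι] (f : ℝ → ℝ)
    (A : Matrix ι ι ℂ) : Matrix ι ι ℂ :=
  if h : A.IsHermitian then
    (h.eigenvectorUnitary : Matrix ι ι ℂ) *
      Matrix.diagonal (fun i => ((f (h.eigenvalues i) : ℝ) : ℂ)) *
      (star (h.eigenvectorUnitary : Matrix ι ι ℂ))
  else 0

/-- Real power `A^s` of a (hermitian positive definite) matrix. -/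
noncomputable def matPow {ι : Type*} [Fintype ι] [DecidableEq ι]
    (A : Matrix ι ι ℂ) (s : ℝ) : Matrix ι ι ℂ :=
  fnCalc (fun t => t ^ s) A

/-- Matrix logarithm of a (hermitian positive definite) matrix. -/
noncomputable def matLog {ι : Type*} [Fintype ι] [DecidableEq ι]
    (A : Matrix ι ι ℂ) : Matrix ι ι ℂ :=
  fnCalc Real.log A

/-- The BKM Dirichlet form `E_L(X) = −∫₀¹ Tr(X* σˢ L(X) σ^{1−s}) ds`. -/
noncomputable def dirichletForm {n : ℕ} (σ : Matrix (Fin n) (Fin n) ℂ)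
    (L : Matrix (Fin n) (Fin n) ℂ → Matrix (Fin n) (Fin n) ℂ)
    (X : Matrix (Fin n) (Fin n) ℂ) : ℝ :=
  -∫ s in (0:ℝ)..1,
    (Matrix.trace (Xᴴ * matPow σ s * L X * matPow σ (1 - s))).re

/-- The BKM variance `Var_{N,σ}(X)` with respect to the conditional expectation `E`. -/
noncomputable def bkmVar {n : ℕ} (σ : Matrix (Fin n) (Fin n) ℂ)
    (E : Matrix (Fin n) (Fin n) ℂ → Matrix (Fin n) (Fin n) ℂ)
    (X : Matrix (Fin n) (Fin n) ℂ) : ℝ :=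
  ∫ s in (0:ℝ)..1,
    (Matrix.trace ((X - E X)ᴴ * matPow σ s * (X - E X) * matPow σ (1 - s))).re

/-- The spectral gap `λ(L) = inf { E_L(X)/Var_{N,σ}(X) : Var_{N,σ}(X) ≠ 0 }`. -/
noncomputable def specGap {n : ℕ} (σ : Matrix (Fin n) (Fin n) ℂ)
    (E L : Matrix (Fin n) (Fin n) ℂ → Matrix (Fin n) (Fin n) ℂ) : ℝ :=
  sInf {r : ℝ | ∃ X : Matrix (Fin n) (Fin n) ℂ,
    bkmVar σ E X ≠ 0 ∧ r = dirichletForm σ L X / bkmVar σ E X}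

/-- `Kst` is the adjoint of `K` with respect to the trace pairing `⟨a,b⟩ = Tr(a*b)`. -/
def IsTraceAdjoint {n : ℕ} (K Kst : Matrix (Fin n) (Fin n) ℂ → Matrix (Fin n) (Fin n) ℂ) : Prop :=
  ∀ a b : Matrix (Fin n) (Fin n) ℂ,
    Matrix.trace (aᴴ * K b) = Matrix.trace ((Kst a)ᴴ * b)

/-- Quantum relative entropy `D(ρ‖ω) = Tr(ρ (log ρ − log ω))`. -/
noncomputable def relEnt {ι : Type*} [Fintype ι] [DecidableEq ι]
    (ρ ω : Matrix ι ι ℂ) : ℝ :=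
  (Matrix.trace (ρ * (matLog ρ - matLog ω))).re

/-- Entropy production `EP_K(ρ) = −Tr(K_*(ρ)(log ρ − log E_{N*}(ρ)))`, expressed via
the trace adjoints `Kst = K_*` and `Est = E_{N*}`. -/
noncomputable def entropyProd {ι : Type*} [Fintype ι] [DecidableEq ι]
    (Kst Est : Matrix ι ι ℂ → Matrix ι ι ℂ) (ρ : Matrix ι ι ℂ) : ℝ :=
  -(Matrix.trace (Kst ρ * (matLog ρ - matLog (Est ρ)))).re

/-- Amplification `K ⊗ id_d` of a map on `Mₙ(ℂ)` by a `d`-dimensional reference system. -/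
noncomputable def tensId {n : ℕ} (d : ℕ)
    (K : Matrix (Fin n) (Fin n) ℂ → Matrix (Fin n) (Fin n) ℂ)
    (X : Matrix (Fin n × Fin d) (Fin n × Fin d) ℂ) :
    Matrix (Fin n × Fin d) (Fin n × Fin d) ℂ :=
  Matrix.of fun p q => K (Matrix.of fun a b => X (a, p.2) (b, q.2)) p.1 q.1

/-- The CMLSI constant, expressed via the trace adjoints `Lst = L_*` and `Est = E_{N*}`:
`CMLSI(L) = inf_{d ≥ 1} inf_ρ EP_{L⊗id_d}(ρ) / D(ρ‖(E_{N*}⊗id_d)(ρ))`. -/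
noncomputable def cmlsi (n : ℕ)
    (Lst Est : Matrix (Fin n) (Fin n) ℂ → Matrix (Fin n) (Fin n) ℂ) : ℝ :=
  sInf {r : ℝ | ∃ d : ℕ, 0 < d ∧ ∃ ρ : Matrix (Fin n × Fin d) (Fin n × Fin d) ℂ,
    ρ.PosDef ∧ Matrix.trace ρ = 1 ∧
    r = entropyProd (tensId d Lst) (tensId d Est) ρ / relEnt ρ (tensId d Est ρ)}


section Stmt16Aux

open Matrix

variable {n : ℕ}

private lemma trace_single_mul (A : Mat n) (i j : Fin n) :
    Matrix.trace (Matrix.single j i (1:ℂ) * A) = A i j := by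
  classical
  simp only [Matrix.trace, Matrix.diag]
  rw [Finset.sum_eq_single j]
  · simp
  · intro k _ hk; simp [hk]
  · simp

private lemma matrix_ext_of_trace {A B : Mat n}
    (h : ∀ z : Mat n, Matrix.trace (z * A) = Matrix.trace (z * B)) : A = B := by
  ext i j
  have := h (Matrix.single j i 1)
  rwa [trace_single_mul, trace_single_mul] at this

private lemma linmap_sum {f : Mat n → Mat n} (hf : IsLinearMap ℂ f) {α : Type*}
    (s : Finset α) (g : α → Mat n) : f (∑ a ∈ s, g a) = ∑ a ∈ s, f (g a) :=
  map_sum (IsLinearMap.mk' f hf) g s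

private lemma lindbladOf_isLinear {m : ℕ} (H : Mat n) (V : Fin m → Mat n) :
    IsLinearMap ℂ (lindbladOf H V) := by
  constructor
  · intro x y
    simp only [lindbladOf, mul_add, add_mul, smul_add, smul_neg, sub_eq_add_neg, neg_add,
      Finset.sum_add_distrib]
    abel
  · intro c x
    simp only [lindbladOf, mul_smul_comm, smul_mul_assoc, smul_add, smul_sub,
      Finset.smul_sum, smul_smul, mul_comm]

private lemma lindbladOf_one {m : ℕ} (H : Mat n) (V : Fin m → Mat n) :
    lindbladOf H V 1 = 0 := by
  simp only [lindbladOf, mul_one, one_mul, sub_self, smul_zero, zero_add]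
  rw [Finset.sum_eq_zero]
  intro i _
  rw [← two_smul ℂ ((V i)ᴴ * V i), smul_smul]
  norm_num

private lemma lindbladOf_conjT {m : ℕ} {H : Mat n} (hH : H.IsHermitian)
    (V : Fin m → Mat n) (x : Mat n) :
    lindbladOf H V xᴴ = (lindbladOf H V x)ᴴ := by
  simp only [lindbladOf, conjTranspose_add, conjTranspose_sub, conjTranspose_smul,
    conjTranspose_mul, conjTranspose_conjTranspose, conjTranspose_sum, hH.eq,
    Complex.star_def, Complex.conj_I, map_inv₀, map_ofNat]
  congr 1
  · rw [neg_smul, ← smul_neg, neg_sub]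
  · refine Finset.sum_congr rfl fun i _ => ?_
    simp only [Matrix.mul_assoc]
    congr 1
    rw [add_comm]

private lemma db_ns {σ : Mat n} {K : Mat n → Mat n}
    (hdb : DetailedBalance σ K) (hstar : ∀ x, K xᴴ = (K x)ᴴ) (a b : Mat n) :
    Matrix.trace (σ * K a * b) = Matrix.trace (σ * a * K b) := by
  have h := hdb aᴴ b
  rwa [hstar a, conjTranspose_conjTranspose, conjTranspose_conjTranspose] at h

private lemma comm_sigma {σ : Mat n} {K : Mat n → Mat n}
    (hdb : DetailedBalance σ K) (hstar : ∀ x, K xᴴ = (K x)ᴴ) (x : Mat n) :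
    σ * K (x * σ) = K (σ * x) * σ := by
  have hns : ∀ a b, Matrix.trace (σ * K a * b) = Matrix.trace (σ * a * K b) :=
    db_ns hdb hstar
  apply matrix_ext_of_trace
  intro z
  calc Matrix.trace (z * (σ * K (x * σ)))
      = Matrix.trace (σ * K (x * σ) * z) := by
        rw [Matrix.trace_mul_comm, Matrix.mul_assoc]
    _ = Matrix.trace (σ * (x * σ) * K z) := hns (x * σ) z
    _ = Matrix.trace ((σ * x) * (σ * K z)) := by simp only [Matrix.mul_assoc]
    _ = Matrix.trace (σ * K z * (σ * x)) := by
        rw [Matrix.trace_mul_comm]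
    _ = Matrix.trace (σ * z * K (σ * x)) := hns z (σ * x)
    _ = Matrix.trace (z * (K (σ * x) * σ)) := by
        rw [← Matrix.trace_mul_cycle, Matrix.mul_assoc]

private lemma psd_trace_re_nonneg {A : Mat n} (hA : A.PosSemidef) :
    0 ≤ (Matrix.trace A).re := by
  classical
  simp only [Matrix.trace, Matrix.diag, Complex.re_sum]
  apply Finset.sum_nonneg
  intro i _
  have h := hA.dotProduct_mulVec_nonneg (Pi.single i 1)
  have he : dotProduct (star (Pi.single i 1)) (A *ᵥ Pi.single i 1) = A i i := by
    rw [dotProduct]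
    rw [Finset.sum_eq_single i]
    · simp [Matrix.mulVec_single, Pi.single_apply]
    · intro k _ hk; simp [Pi.single_apply, hk]
    · simp
  rw [he] at h
  simpa using (Complex.le_def.mp h).1

private lemma trace_sigma_psd {σ A : Mat n} (hσ : σ.PosSemidef) (hA : A.PosSemidef) :
    0 ≤ (Matrix.trace (σ * A)).re := by
  obtain ⟨B, hB⟩ : ∃ B : Mat n, σ = Bᴴ * B := by
    open scoped MatrixOrder in
    exact ⟨CFC.sqrt σ, by
      rw [(CFC.sqrt_nonneg σ).posSemidef.1.eq, CFC.sqrt_mul_sqrt_self σ hσ.nonneg]⟩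
  have h3 : (B * A * Bᴴ).PosSemidef := hA.mul_mul_conjTranspose_same B
  have h4 : Matrix.trace (σ * A) = Matrix.trace (B * A * Bᴴ) := by
    rw [hB, Matrix.mul_assoc, Matrix.trace_mul_comm, Matrix.mul_assoc]
  rw [h4]
  exact psd_trace_re_nonneg h3

private lemma gradcp_posSemidef {K : Mat n → Mat n} (hcp : GradCP K) (Y : Mat n) :
    (gradForm K Y Y).PosSemidef := by
  classical
  set X : Matrix (Fin 1 × Fin n) (Fin 1 × Fin n) ℂ := Matrix.of fun p q => Y p.2 q.2
    with hXdef
  have hampX : ∀ Z : Mat n,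
      amp 1 K (Matrix.of fun p q => Z p.2 q.2) = Matrix.of fun p q => K Z p.2 q.2 := by
    intro Z
    ext p q
    simp only [amp, Matrix.of_apply]
    rfl
  have hmul : ∀ A B : Mat n,
      ((Matrix.of fun (p q : Fin 1 × Fin n) => A p.2 q.2) *
        (Matrix.of fun (p q : Fin 1 × Fin n) => B p.2 q.2)) =
        Matrix.of fun (p q : Fin 1 × Fin n) => (A * B) p.2 q.2 := by
    intro A B
    ext p q
    simp [Matrix.mul_apply, Fintype.sum_prod_type, Fin.sum_univ_one]
  have hXH : Xᴴ = Matrix.of fun (p q : Fin 1 × Fin n) => Yᴴ p.2 q.2 := by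
    ext p q
    simp [hXdef, Matrix.conjTranspose_apply]
  have h1 : gradFormAmp 1 K X X = Matrix.of fun p q => (gradForm K Y Y) p.2 q.2 := by
    rw [gradFormAmp, hXH]
    conv_lhs => rw [hXdef]
    rw [hmul, hampX, hampX, hampX, hmul, hmul]
    ext p q
    simp [gradForm]
  have key : gradForm K Y Y =
      (gradFormAmp 1 K X X).submatrix (fun i => ((0 : Fin 1), i))
        (fun i => ((0 : Fin 1), i)) := by
    rw [h1]; ext i j; rfl
  rw [key]
  exact (hcp 1 X).submatrix _

private lemma trace_sigma_K_neg {σ : Mat n} (hσ : σ.PosDef) {K : Mat n → Mat n}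
    (hK1 : K 1 = 0) (hstar : ∀ x, K xᴴ = (K x)ᴴ) (hdb : DetailedBalance σ K)
    (hcp : GradCP K) (Y : Mat n) :
    (Matrix.trace (σ * Yᴴ * K Y)).re ≤ 0 := by
  have h0 : Matrix.trace (σ * K (Yᴴ * Y)) = 0 := by
    have h := hdb 1 (Yᴴ * Y)
    simp only [hK1, conjTranspose_zero, Matrix.mul_zero, Matrix.zero_mul,
      Matrix.trace_zero, conjTranspose_one, Matrix.mul_one] at h
    exact h.symm
  have h1 : Matrix.trace (σ * (K Yᴴ * Y)) = Matrix.trace (σ * Yᴴ * K Y) := by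
    rw [hstar, ← Matrix.mul_assoc]
    exact hdb Y Y
  have h2 : Matrix.trace (σ * gradForm K Y Y) =
      - Matrix.trace (σ * Yᴴ * K Y) - Matrix.trace (σ * Yᴴ * K Y) := by
    rw [gradForm, Matrix.mul_sub, Matrix.mul_sub, Matrix.trace_sub, Matrix.trace_sub,
      h0, h1, ← Matrix.mul_assoc]
    ring
  have h3 := trace_sigma_psd hσ.posSemidef (gradcp_posSemidef hcp Y)
  rw [h2] at h3
  simp only [Complex.sub_re, Complex.neg_re] at h3
  linarith

private lemma core_pointwise {σ : Mat n} (hσ : σ.PosDef) {K : Mat n → Mat n}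
    (hlin : IsLinearMap ℂ K) (hK1 : K 1 = 0) (hstar : ∀ x, K xᴴ = (K x)ᴴ)
    (hdb : DetailedBalance σ K) (hcp : GradCP K)
    (X : Mat n) (s : ℝ) :
    (Matrix.trace (Xᴴ * matPow σ s * K X * matPow σ (1 - s))).re ≤ 0 := by
  classical
  have h : σ.IsHermitian := hσ.1
  set U : Mat n := (h.eigenvectorUnitary : Mat n) with hUdef
  have hUU : star U * U = 1 := Matrix.mem_unitaryGroup_iff'.mp h.eigenvectorUnitary.2
  have hUU' : U * star U = 1 := Matrix.mem_unitaryGroup_iff.mp h.eigenvectorUnitary.2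
  have hUU2 : ∀ Z : Mat n, star U * (U * Z) = Z := by
    intro Z; rw [← Matrix.mul_assoc, hUU, Matrix.one_mul]
  have hUU2' : ∀ Z : Mat n, U * (star U * Z) = Z := by
    intro Z; rw [← Matrix.mul_assoc, hUU', Matrix.one_mul]
  set lam : Fin n → ℝ := h.eigenvalues with hlamdef
  have hlam : ∀ i, 0 < lam i := fun i => hσ.eigenvalues_pos i
  set d : ℝ → Mat n := fun t => Matrix.diagonal (fun i => ((lam i ^ t : ℝ) : ℂ)) with hd
  have hmatPow : ∀ t : ℝ, matPow σ t = U * d t * star U := by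
    intro t
    simp only [matPow, fnCalc]
    rw [dif_pos h]
  have hdmul : ∀ a b : ℝ, d a * d b = d (a + b) := by
    intro a b
    have hfun : (fun i : Fin n => ((lam i ^ a : ℝ) : ℂ) * ((lam i ^ b : ℝ) : ℂ))
        = fun i => ((lam i ^ (a + b) : ℝ) : ℂ) := by
      funext i
      rw [← Complex.ofReal_mul, ← Real.rpow_add (hlam i)]
    simp only [hd]
    rw [Matrix.diagonal_mul_diagonal, hfun]
  have hdmul2 : ∀ (a b : ℝ) (Z : Mat n), Z * d a * d b = Z * d (a + b) := by
    intro a b Z; rw [Matrix.mul_assoc, hdmul]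
  have hdh : ∀ t, (d t)ᴴ = d t := by
    intro t
    have hfun : star (fun i : Fin n => ((lam i ^ t : ℝ) : ℂ))
        = fun i : Fin n => ((lam i ^ t : ℝ) : ℂ) := by
      funext i
      simp [Complex.conj_ofReal]
    simp only [hd, Matrix.diagonal_conjTranspose]
    rw [hfun]
  have hσspec : σ = U * d 1 * star U := by
    have hfun : (fun i : Fin n => ((lam i ^ (1:ℝ) : ℝ) : ℂ))
        = RCLike.ofReal ∘ h.eigenvalues := by
      funext i
      rw [Real.rpow_one]
      rfl
    simp only [hd]
    rw [hfun]
    exact h.spectral_theorem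
  set Kt : Mat n → Mat n := fun x => star U * K (U * x * star U) * U with hKt
  have hKtlin : IsLinearMap ℂ Kt := by
    constructor
    · intro a b
      simp only [hKt, Matrix.mul_add, Matrix.add_mul, hlin.map_add]
    · intro c a
      simp only [hKt, mul_smul_comm, smul_mul_assoc, hlin.map_smul]
  have hcommσ : ∀ x, σ * K (x * σ) = K (σ * x) * σ := comm_sigma hdb hstar
  have hd1 : d 1 = star U * σ * U := by
    rw [hσspec]
    simp only [Matrix.mul_assoc, hUU2, hUU2', hUU, hUU', Matrix.mul_one]
  have hT2 : ∀ x, d 1 * Kt (x * d 1) = Kt (d 1 * x) * d 1 := by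
    intro x
    have hcommσ2 : ∀ w Z, σ * (K (w * σ) * Z) = K (σ * w) * (σ * Z) := fun w Z => by
      rw [← Matrix.mul_assoc, hcommσ, Matrix.mul_assoc]
    have hc := hcommσ2 (U * x * star U) U
    simp only [hKt, hd1, Matrix.mul_assoc] at hc ⊢
    simp only [hUU2, hUU2', hUU, hUU', Matrix.mul_one] at hc ⊢
    rw [hc]
  have hsmul_r : ∀ (k l : Fin n) (t : ℝ),
      Matrix.single k l (1:ℂ) * d t =
        ((lam l ^ t : ℝ) : ℂ) • Matrix.single k l 1 := by
    intro k l t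
    ext a b
    simp only [hd, Matrix.mul_diagonal, Matrix.smul_apply, smul_eq_mul]
    by_cases hbl : b = l
    · subst hbl; rw [mul_comm]
    · simp [Matrix.single_apply_of_col_ne k a (Ne.symm hbl)]
  have hsmul_l : ∀ (k l : Fin n) (t : ℝ),
      d t * Matrix.single k l (1:ℂ) =
        ((lam k ^ t : ℝ) : ℂ) • Matrix.single k l 1 := by
    intro k l t
    ext a b
    simp only [hd, Matrix.diagonal_mul, Matrix.smul_apply, smul_eq_mul]
    by_cases hak : a = k
    · subst hak; rfl
    · simp [Matrix.single_apply_of_row_ne (Ne.symm hak)]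
  have hT3 : ∀ k l i j, ((lam i : ℂ) * (lam l : ℂ)) * Kt (Matrix.single k l 1) i j
      = ((lam k : ℂ) * (lam j : ℂ)) * Kt (Matrix.single k l 1) i j := by
    intro k l i j
    have h2 := hT2 (Matrix.single k l 1)
    rw [hsmul_r, hsmul_l, hKtlin.map_smul, hKtlin.map_smul] at h2
    have h3 := congr_fun (congr_fun h2 i) j
    simp only [hd, Matrix.diagonal_mul, Matrix.mul_diagonal, Matrix.smul_apply,
      smul_eq_mul, Real.rpow_one] at h3
    rw [mul_assoc, h3]
    ring
  have hT5 : ∀ (t : ℝ) (k l : Fin n),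
      Kt (d t * Matrix.single k l 1 * d (-t))
        = d t * Kt (Matrix.single k l 1) * d (-t) := by
    intro t k l
    have harg : d t * Matrix.single k l (1:ℂ) * d (-t)
        = (((lam k ^ t) * (lam l ^ (-t)) : ℝ) : ℂ) • Matrix.single k l 1 := by
      rw [hsmul_l, Matrix.smul_mul, hsmul_r, smul_smul, ← Complex.ofReal_mul, mul_comm]
    rw [harg, hKtlin.map_smul]
    ext i j
    simp only [Matrix.smul_apply, smul_eq_mul, hd, Matrix.diagonal_mul, Matrix.mul_diagonal]
    rcases eq_or_ne (Kt (Matrix.single k l 1) i j) 0 with h0 | h0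
    · simp [h0]
    · have hc : (lam i : ℂ) * (lam l : ℂ) = (lam k : ℂ) * (lam j : ℂ) :=
        mul_right_cancel₀ h0 (hT3 k l i j)
      have hr : lam i * lam l = lam k * lam j := by exact_mod_cast hc
      have hpow : (lam i)^t * (lam l)^t = (lam k)^t * (lam j)^t := by
        rw [← Real.mul_rpow (hlam i).le (hlam l).le,
          ← Real.mul_rpow (hlam k).le (hlam j).le, hr]
      have h2 : (lam k)^t * (lam l)^(-t) = (lam i)^t * (lam j)^(-t) := by
        rw [Real.rpow_neg (hlam l).le, Real.rpow_neg (hlam j).le]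
        have hl0 : (lam l)^t ≠ 0 := (Real.rpow_pos_of_pos (hlam l) t).ne'
        have hj0 : (lam j)^t ≠ 0 := (Real.rpow_pos_of_pos (hlam j) t).ne'
        field_simp
        linear_combination -hpow
      have h2C : ((lam k ^ t * lam l ^ (-t) : ℝ) : ℂ)
          = ((lam i ^ t : ℝ) : ℂ) * ((lam j ^ (-t) : ℝ) : ℂ) := by
        rw [h2]; push_cast; ring
      rw [h2C]
      ring
  have hT5x : ∀ (t : ℝ) (x : Mat n),
      Kt (d t * x * d (-t)) = d t * Kt x * d (-t) := by
    intro t x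
    have hx := Matrix.matrix_eq_sum_single x
    have hsb : ∀ k l : Fin n, Matrix.single k l (x k l)
        = x k l • Matrix.single k l (1:ℂ) := by
      intro k l; rw [Matrix.smul_single, smul_eq_mul, mul_one]
    have hKtx : Kt x = ∑ k, ∑ l, x k l • Kt (Matrix.single k l 1) := by
      conv_lhs => rw [hx]
      rw [linmap_sum hKtlin]
      refine Finset.sum_congr rfl fun k _ => ?_
      rw [linmap_sum hKtlin]
      refine Finset.sum_congr rfl fun l _ => ?_
      rw [hsb, hKtlin.map_smul]
    have hdecomp : d t * x * d (-t)
        = ∑ k, ∑ l, x k l • (d t * Matrix.single k l 1 * d (-t)) := by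
      conv_lhs => rw [hx]
      simp only [hsb, Matrix.mul_sum, Matrix.sum_mul, Matrix.mul_smul, Matrix.smul_mul]
    rw [hdecomp, linmap_sum hKtlin, hKtx]
    simp only [Matrix.mul_sum, Matrix.sum_mul, Matrix.mul_smul, Matrix.smul_mul]
    refine Finset.sum_congr rfl fun k _ => ?_
    rw [linmap_sum hKtlin]
    refine Finset.sum_congr rfl fun l _ => ?_
    rw [hKtlin.map_smul, hT5]
  set Xt : Mat n := star U * X * U with hXt
  have hXX : X = U * Xt * star U := by
    rw [hXt]
    simp only [Matrix.mul_assoc, hUU2, hUU2', hUU, hUU', Matrix.mul_one]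
  have hXH : Xᴴ = U * Xtᴴ * star U := by
    conv_lhs => rw [hXX]
    simp only [Matrix.conjTranspose_mul, Matrix.star_eq_conjTranspose,
      Matrix.conjTranspose_conjTranspose, Matrix.mul_assoc]
  have hKX : K X = U * Kt Xt * star U := by
    simp only [hKt]
    conv_lhs => rw [hXX]
    simp only [Matrix.mul_assoc, hUU2, hUU2', hUU, hUU', Matrix.mul_one]
  have trace_conj : ∀ A : Mat n, Matrix.trace (U * A * star U) = Matrix.trace A := by
    intro A
    rw [Matrix.trace_mul_cycle, hUU, Matrix.one_mul]
  have step1 : Matrix.trace (Xᴴ * matPow σ s * K X * matPow σ (1 - s))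
      = Matrix.trace (Xtᴴ * d s * Kt Xt * d (1 - s)) := by
    rw [hmatPow, hmatPow, hKX, hXH]
    rw [show (U * Xtᴴ * star U) * (U * d s * star U) * (U * Kt Xt * star U) *
        (U * d (1-s) * star U) = U * (Xtᴴ * d s * Kt Xt * d (1-s)) * star U by
      simp only [Matrix.mul_assoc, hUU2, hUU2', hUU, hUU', Matrix.mul_one]]
    exact trace_conj _
  set W : Mat n := d (s/2) * Xt * d (-(s/2)) with hW
  have hWH : Wᴴ = d (-(s/2)) * Xtᴴ * d (s/2) := by
    rw [hW]
    simp only [Matrix.conjTranspose_mul, hdh, Matrix.mul_assoc]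
  have hKW : Kt W = d (s/2) * Kt Xt * d (-(s/2)) := by
    rw [hW]; exact hT5x (s/2) Xt
  have step2 : Matrix.trace (Xtᴴ * d s * Kt Xt * d (1 - s))
      = Matrix.trace (d 1 * Wᴴ * Kt W) := by
    have e1 : d 1 * Wᴴ * Kt W
        = d (1 + -(s/2)) * Xtᴴ * d (s/2 + s/2) * Kt Xt * d (-(s/2)) := by
      rw [hWH, hKW]
      simp only [← Matrix.mul_assoc]
      rw [hdmul]
      simp only [hdmul2]
    rw [e1]
    rw [show (s/2 + s/2 : ℝ) = s by ring]
    rw [Matrix.trace_mul_comm (d (1 + -(s/2)) * Xtᴴ * d s * Kt Xt) (d (-(s/2)))]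
    rw [show d (-(s/2)) * (d (1 + -(s/2)) * Xtᴴ * d s * Kt Xt)
        = d (-(s/2)) * d (1 + -(s/2)) * Xtᴴ * d s * Kt Xt by
      simp only [Matrix.mul_assoc]]
    rw [hdmul]
    rw [show (-(s/2) + (1 + -(s/2)) : ℝ) = 1 - s by ring]
    rw [Matrix.trace_mul_comm (Xtᴴ * d s * Kt Xt) (d (1 - s))]
    simp only [Matrix.mul_assoc]
  set Y : Mat n := U * W * star U with hY
  have hYH : Yᴴ = U * Wᴴ * star U := by
    rw [hY]
    simp only [Matrix.conjTranspose_mul, Matrix.star_eq_conjTranspose,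
      Matrix.conjTranspose_conjTranspose, Matrix.mul_assoc]
  have hKY : K Y = U * Kt W * star U := by
    rw [hY]
    simp only [hKt]
    simp only [Matrix.mul_assoc, hUU2, hUU2', hUU, hUU', Matrix.mul_one]
  have step3 : Matrix.trace (d 1 * Wᴴ * Kt W) = Matrix.trace (σ * Yᴴ * K Y) := by
    rw [hYH, hKY, hσspec]
    rw [show (U * d 1 * star U) * (U * Wᴴ * star U) * (U * Kt W * star U)
        = U * (d 1 * Wᴴ * Kt W) * star U by
      simp only [Matrix.mul_assoc, hUU2, hUU2', hUU, hUU', Matrix.mul_one]]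
    rw [trace_conj]
  rw [step1, step2, step3]
  exact trace_sigma_K_neg hσ hK1 hstar hdb hcp Y

end Stmt16Aux

/-- `Γ_L ≤_cp C Γ_{L'}` implies `E_L(X) ≤ C E_{L'}(X)` for the BKM
Dirichlet forms of `σ`-detailed-balance Lindblad generators. -/
theorem stmt16 (n : ℕ) (σ : Mat n) (hσ : σ.PosDef) (hσ1 : Matrix.trace σ = 1)
    (L L' : Mat n → Mat n) (hL : IsLindblad L) (hL' : IsLindblad L')
    (hdb : DetailedBalance σ L) (hdb' : DetailedBalance σ L')
    (C : ℝ) (hC : 0 < C)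
    (hcp : GradCP (fun x => (C : ℂ) • L' x - L x)) :
    ∀ X : Mat n, dirichletForm σ L X ≤ C * dirichletForm σ L' X := by
  intro X
  obtain ⟨H1, m1, V1, hH1, hL1e⟩ := hL
  obtain ⟨H2, m2, V2, hH2, hL2e⟩ := hL'
  subst hL1e
  subst hL2e
  have hLlin := lindbladOf_isLinear H1 V1
  have hL'lin := lindbladOf_isLinear H2 V2
  set K : Mat n → Mat n := fun x => (C : ℂ) • lindbladOf H2 V2 x - lindbladOf H1 V1 x
    with hKdef
  have hKlin : IsLinearMap ℂ K := by
    constructor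
    · intro a b
      simp only [hKdef, hLlin.map_add, hL'lin.map_add, smul_add]
      abel
    · intro c a
      simp only [hKdef, hLlin.map_smul, hL'lin.map_smul, smul_sub, smul_smul, mul_comm]
  have hK1 : K 1 = 0 := by
    simp [hKdef, lindbladOf_one]
  have hKstar : ∀ x, K xᴴ = (K x)ᴴ := by
    intro x
    simp only [hKdef, lindbladOf_conjT hH1, lindbladOf_conjT hH2,
      Matrix.conjTranspose_sub, Matrix.conjTranspose_smul, Complex.star_def,
      Complex.conj_ofReal]
  have hKdb : DetailedBalance σ K := by
    intro x y
    simp only [hKdef, Matrix.conjTranspose_sub, Matrix.conjTranspose_smul,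
      Complex.star_def, Complex.conj_ofReal, Matrix.mul_sub, Matrix.sub_mul,
      Matrix.mul_smul, Matrix.smul_mul, Matrix.trace_sub, Matrix.trace_smul]
    rw [hdb x y, hdb' x y]
  have hcore : ∀ s : ℝ,
      (Matrix.trace (Xᴴ * matPow σ s * K X * matPow σ (1-s))).re ≤ 0 :=
    fun s => core_pointwise hσ hKlin hK1 hKstar hKdb hcp X s
  have hfg : ∀ s : ℝ,
      C * (Matrix.trace (Xᴴ * matPow σ s * lindbladOf H2 V2 X * matPow σ (1-s))).re ≤
      (Matrix.trace (Xᴴ * matPow σ s * lindbladOf H1 V1 X * matPow σ (1-s))).re := by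
    intro s
    have h := hcore s
    have hexp : Xᴴ * matPow σ s * K X * matPow σ (1-s)
        = (C:ℂ) • (Xᴴ * matPow σ s * lindbladOf H2 V2 X * matPow σ (1-s))
          - Xᴴ * matPow σ s * lindbladOf H1 V1 X * matPow σ (1-s) := by
      simp only [hKdef, Matrix.mul_sub, Matrix.sub_mul, Matrix.mul_smul, Matrix.smul_mul]
    rw [hexp, Matrix.trace_sub, Matrix.trace_smul] at h
    simp only [Complex.sub_re, smul_eq_mul, Complex.re_ofReal_mul] at h
    linarith
  have hb : ∀ i : Fin n, Continuous fun s : ℝ => (hσ.1.eigenvalues i) ^ s := by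
    intro i
    have he : (fun s : ℝ => (hσ.1.eigenvalues i) ^ s)
        = fun s => Real.exp (Real.log (hσ.1.eigenvalues i) * s) := by
      funext s
      rw [Real.rpow_def_of_pos (hσ.eigenvalues_pos i)]
    rw [he]
    exact Real.continuous_exp.comp (continuous_const.mul continuous_id)
  have hcontPow : Continuous fun s : ℝ => matPow σ s := by
    have heq : (fun s : ℝ => matPow σ s)
        = fun s => (hσ.1.eigenvectorUnitary : Mat n) *
            Matrix.diagonal (fun i => ((hσ.1.eigenvalues i ^ s : ℝ) : ℂ)) *
            star (hσ.1.eigenvectorUnitary : Mat n) := by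
      funext s
      simp only [matPow, fnCalc]
      rw [dif_pos hσ.1]
    rw [heq]
    exact (continuous_const.matrix_mul
      ((continuous_pi fun i => Complex.continuous_ofReal.comp (hb i)).matrix_diagonal)).matrix_mul
      continuous_const
  have hc1 : Continuous fun s : ℝ => matPow σ (1-s) :=
    hcontPow.comp (continuous_const.sub continuous_id)
  have hcontT : ∀ B : Mat n,
      Continuous fun s : ℝ => (Matrix.trace (Xᴴ * matPow σ s * B * matPow σ (1-s))).re := by
    intro B
    exact Complex.continuous_re.comp
      ((((continuous_const.matrix_mul hcontPow).matrix_mul continuous_const).matrix_mul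
        hc1).matrix_trace)
  have hint : (∫ s in (0:ℝ)..1,
        C * (Matrix.trace (Xᴴ * matPow σ s * lindbladOf H2 V2 X * matPow σ (1-s))).re) ≤
      ∫ s in (0:ℝ)..1,
        (Matrix.trace (Xᴴ * matPow σ s * lindbladOf H1 V1 X * matPow σ (1-s))).re :=
    intervalIntegral.integral_mono_on zero_le_one
      ((continuous_const.mul (hcontT _)).intervalIntegrable 0 1)
      ((hcontT _).intervalIntegrable 0 1)
      (fun s _ => hfg s)
  rw [intervalIntegral.integral_const_mul] at hint
  simp only [dirichletForm]
  linarith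
end
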